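/- arXiv:2202.06898 — 4 statements merged into one kernel-verified Lean document; each statement's English description precedes it below -/
import Mathlib

section
/- Let (N,v) be the matching game on a finite simple graph G=(V,E) with positive edge weights w, and let x ∈ ℝ^N be an allocation (i.e. x(N) = v(N)). Then x belongs to the core of (N,v) if and only if x_i ≥ 0 for every vertex i ∈ V and x_i + x_j ≥ w(ij) for every edge ij ∈ E. -/
open scoped Classical
open Finset

namespace MatchingGames

variable {V : Type*}

/-- `M` is a matching of the graph `G`: a set of edges of `G` that are pairwise
vertex-disjoint. -/
def IsMatching (G : SimpleGraph V) (M : Finset (Sym2 V)) : Prop :=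
  (∀ e ∈ M, e ∈ G.edgeSet) ∧
    ∀ e ∈ M, ∀ f ∈ M, e ≠ f → ∀ v : V, v ∈ e → v ∉ f

/-- every endpoint of every edge of `M` belongs to the coalition `S`, i.e. `M` is a
set of edges of the induced subgraph `G[S]`. -/
def EdgesIn (S : Finset V) (M : Finset (Sym2 V)) : Prop :=
  ∀ e ∈ M, ∀ v : V, v ∈ e → v ∈ S

/-- the weight `w(M)` of a set of edges `M`. -/
noncomputable def mWeight (w : Sym2 V → ℝ) (M : Finset (Sym2 V)) : ℝ :=
  ∑ e ∈ M, w e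

/-- the value `v(S)` of a coalition `S` in the matching game on `(G,w)`:
the maximum weight of a matching of the induced subgraph `G[S]`. -/
noncomputable def matchVal (G : SimpleGraph V) (w : Sym2 V → ℝ) (S : Finset V) : ℝ :=
  sSup {t | ∃ M : Finset (Sym2 V), IsMatching G M ∧ EdgesIn S M ∧ t = mWeight w M}

/-- `x` is a core allocation of the cooperative game with value function `v`:
`x(N) = v(N)` and `x(S) ≥ v(S)` for every coalition `S`. -/
def InCore [Fintype V] (v : Finset V → ℝ) (x : V → ℝ) : Prop :=
  (∑ i, x i) = v Finset.univ ∧ ∀ S : Finset V, v S ≤ ∑ i ∈ S, x i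

/-- endpoints of a `Sym2` as a finset -/
noncomputable def ep (e : Sym2 V) : Finset V := {e.out.1, e.out.2}

lemma mem_ep {e : Sym2 V} {v : V} : v ∈ ep e ↔ v ∈ e := by
  have h : s(e.out.1, e.out.2) = e := e.out_eq
  constructor
  · intro hv
    rw [← h, Sym2.mem_iff]
    simpa [ep] using hv
  · intro hv
    rw [← h, Sym2.mem_iff] at hv
    simpa [ep] using hv

lemma zero_mem (G : SimpleGraph V) (w : Sym2 V → ℝ) (S : Finset V) :
    (0 : ℝ) ∈ {t | ∃ M : Finset (Sym2 V), IsMatching G M ∧ EdgesIn S M ∧ t = mWeight w M} := by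
  exact ⟨∅, ⟨fun e he => absurd he (Finset.notMem_empty e),
    fun e he => absurd he (Finset.notMem_empty e)⟩,
    fun e he => absurd he (Finset.notMem_empty e), by simp [mWeight]⟩

lemma bdd [Fintype V] (G : SimpleGraph V) (w : Sym2 V → ℝ)
    (hw : ∀ e ∈ G.edgeSet, 0 < w e) (S : Finset V) :
    BddAbove {t | ∃ M : Finset (Sym2 V), IsMatching G M ∧ EdgesIn S M ∧ t = mWeight w M} := by
  refine ⟨∑ e ∈ G.edgeFinset, w e, ?_⟩
  rintro t ⟨M, hM, -, rfl⟩
  apply Finset.sum_le_sum_of_subset_of_nonneg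
  · intro e he; exact SimpleGraph.mem_edgeFinset.mpr (hM.1 e he)
  · intro e he _; exact (hw e (SimpleGraph.mem_edgeFinset.mp he)).le

lemma matching_sum_le [Fintype V] (G : SimpleGraph V) (w : Sym2 V → ℝ) (x : V → ℝ)
    (hpos : ∀ i, 0 ≤ x i) (hedge : ∀ i j : V, G.Adj i j → w s(i, j) ≤ x i + x j)
    (S : Finset V) (M : Finset (Sym2 V)) (hM : IsMatching G M) (hMS : EdgesIn S M) :
    mWeight w M ≤ ∑ i ∈ S, x i := by
  have step1 : mWeight w M ≤ ∑ e ∈ M, ∑ v ∈ ep e, x v := by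
    apply Finset.sum_le_sum
    intro e he
    have hE := hM.1 e he
    clear he
    revert hE
    induction e using Sym2.ind with
    | _ a b =>
      intro hE
      have hadj : G.Adj a b := hE
      have hep : ep s(a, b) = {a, b} := by
        ext v; rw [mem_ep]; simp [Sym2.mem_iff]
      rw [hep, Finset.sum_pair hadj.ne]
      exact hedge a b hadj
  have hdisj : (M : Set (Sym2 V)).PairwiseDisjoint ep := by
    intro e he f hf hef
    simp only [Function.onFun, Finset.disjoint_left]
    intro v hve hvf
    exact hM.2 e he f hf hef v (mem_ep.mp hve) (mem_ep.mp hvf)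
  have step2 : ∑ e ∈ M, ∑ v ∈ ep e, x v = ∑ v ∈ M.biUnion ep, x v :=
    (Finset.sum_biUnion hdisj).symm
  have hsub : M.biUnion ep ⊆ S := by
    intro v hv
    obtain ⟨e, he, hve⟩ := Finset.mem_biUnion.mp hv
    exact hMS e he v (mem_ep.mp hve)
  calc mWeight w M ≤ ∑ e ∈ M, ∑ v ∈ ep e, x v := step1
    _ = ∑ v ∈ M.biUnion ep, x v := step2
    _ ≤ ∑ v ∈ S, x v := Finset.sum_le_sum_of_subset_of_nonneg hsub fun i _ _ => hpos i

/-- an allocation `x` of the matching game on `(G,w)` is in the core if and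
only if `x` is nonnegative and `x i + x j ≥ w(ij)` for every edge `ij` of `G`. -/
theorem statement0 [Fintype V] (G : SimpleGraph V) (w : Sym2 V → ℝ)
    (hw : ∀ e ∈ G.edgeSet, 0 < w e) (x : V → ℝ)
    (hx : (∑ i, x i) = matchVal G w Finset.univ) :
    InCore (matchVal G w) x ↔
      (∀ i : V, 0 ≤ x i) ∧ ∀ i j : V, G.Adj i j → w s(i, j) ≤ x i + x j := by
  constructor
  · rintro ⟨-, hcore⟩
    constructor
    · intro i
      have h0 : (0 : ℝ) ≤ matchVal G w {i} :=
        le_csSup (bdd G w hw {i}) (zero_mem G w {i})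
      have := hcore {i}
      simpa using h0.trans this
    · intro i j hadj
      have hne : i ≠ j := hadj.ne
      have hmem : w s(i, j) ∈ {t | ∃ M : Finset (Sym2 V),
          IsMatching G M ∧ EdgesIn ({i, j} : Finset V) M ∧ t = mWeight w M} := by
        refine ⟨{s(i, j)}, ⟨?_, ?_⟩, ?_, ?_⟩
        · intro e he
          rw [Finset.mem_singleton] at he
          subst he
          exact hadj
        · intro e he f hf hef
          rw [Finset.mem_singleton] at he hf
          exact absurd (he.trans hf.symm) hef
        · intro e he v hv
          rw [Finset.mem_singleton] at he
          subst he
          rw [Sym2.mem_iff] at hv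
          rcases hv with h | h <;> simp [h]
        · simp [mWeight]
      have h1 : w s(i, j) ≤ matchVal G w {i, j} :=
        le_csSup (bdd G w hw {i, j}) hmem
      have h2 := hcore {i, j}
      rw [Finset.sum_pair hne] at h2
      exact h1.trans h2
  · rintro ⟨hpos, hedge⟩
    refine ⟨hx, fun S => ?_⟩
    apply csSup_le ⟨0, zero_mem G w S⟩
    rintro t ⟨M, hM, hMS, rfl⟩
    exact matching_sum_le G w x hpos hedge S M hM hMS

end MatchingGames
end

section
/- Let G=(V,E) be a finite simple bipartite graph with positive edge weights w and let (N,v) be the assignment game on (G,w). A vector x ∈ ℝ^N is a core allocation of (N,v) if and only if there exists a stable solution (M,p) for the instance (G,w) of Stable Marriage with Payments whose total pay-off vector p^t equals x. -/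
open scoped Classical
open Finset

namespace MatchingGames

variable {V : Type*}

/-- `(M,p)` is a solution for the instance `(G,w)`: `M` is a matching of `G`, matched
pairs split the weight of their edge into two nonnegative pay-offs, and all other
pay-offs are zero. -/
def IsSolution (G : SimpleGraph V) (w : Sym2 V → ℝ) (M : Finset (Sym2 V))
    (p : V → V → ℝ) : Prop :=
  IsMatching G M ∧
    (∀ i j : V, s(i, j) ∈ M → 0 ≤ p i j ∧ 0 ≤ p j i ∧ p i j + p j i = w s(i, j)) ∧
    ∀ i j : V, s(i, j) ∉ M → p i j = 0

/-- the total pay-off vector `p^t`. -/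
noncomputable def totalPayoff [Fintype V] (p : V → V → ℝ) (i : V) : ℝ := ∑ j, p i j

/-- a solution `(M,p)` is stable if no pair `{i,j}` with `ij ∈ E \ M` satisfies
`p^t(i) + p^t(j) < w(ij)`. -/
def IsStable [Fintype V] (G : SimpleGraph V) (w : Sym2 V → ℝ) (M : Finset (Sym2 V))
    (p : V → V → ℝ) : Prop :=
  IsSolution G w M p ∧
    ∀ i j : V, G.Adj i j → s(i, j) ∉ M →
      w s(i, j) ≤ totalPayoff p i + totalPayoff p j

/-! ### Auxiliary lemmas -/

/-- the set of values achievable by matchings inside `S`. -/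
def valSet (G : SimpleGraph V) (w : Sym2 V → ℝ) (S : Finset V) : Set ℝ :=
  {t | ∃ M : Finset (Sym2 V), IsMatching G M ∧ EdgesIn S M ∧ t = mWeight w M}

lemma matchVal_eq_sSup (G : SimpleGraph V) (w : Sym2 V → ℝ) (S : Finset V) :
    matchVal G w S = sSup (valSet G w S) := rfl

lemma zero_mem_valSet (G : SimpleGraph V) (w : Sym2 V → ℝ) (S : Finset V) :
    (0:ℝ) ∈ valSet G w S :=
  ⟨∅, ⟨fun e he => absurd he (Finset.notMem_empty e),
      fun e he => absurd he (Finset.notMem_empty e)⟩,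
    fun e he => absurd he (Finset.notMem_empty e), by simp [mWeight]⟩

lemma valSet_finite [Fintype V] (G : SimpleGraph V) (w : Sym2 V → ℝ) (S : Finset V) :
    (valSet G w S).Finite := by
  apply (Set.finite_range (mWeight w)).subset
  rintro t ⟨M, -, -, rfl⟩
  exact ⟨M, rfl⟩

lemma le_matchVal [Fintype V] {G : SimpleGraph V} {w : Sym2 V → ℝ} {S : Finset V}
    {M : Finset (Sym2 V)} (hM : IsMatching G M) (hS : EdgesIn S M) :
    mWeight w M ≤ matchVal G w S :=
  le_csSup (valSet_finite G w S).bddAbove ⟨M, hM, hS, rfl⟩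

lemma matchVal_le [Fintype V] {G : SimpleGraph V} {w : Sym2 V → ℝ} {S : Finset V} {c : ℝ}
    (h : ∀ M : Finset (Sym2 V), IsMatching G M → EdgesIn S M → mWeight w M ≤ c) :
    matchVal G w S ≤ c := by
  refine csSup_le ⟨0, zero_mem_valSet G w S⟩ ?_
  rintro t ⟨M, hM, hS, rfl⟩
  exact h M hM hS

lemma matchVal_nonneg [Fintype V] (G : SimpleGraph V) (w : Sym2 V → ℝ) (S : Finset V) :
    0 ≤ matchVal G w S :=
  le_csSup (valSet_finite G w S).bddAbove (zero_mem_valSet G w S)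

lemma exists_max_matching [Fintype V] (G : SimpleGraph V) (w : Sym2 V → ℝ) :
    ∃ M : Finset (Sym2 V), IsMatching G M ∧ EdgesIn Finset.univ M ∧
      matchVal G w Finset.univ = mWeight w M := by
  have h := Set.Nonempty.csSup_mem ⟨0, zero_mem_valSet G w Finset.univ⟩
    (valSet_finite G w Finset.univ)
  exact h

/-- the single-edge matching. -/
lemma single_edge_le [Fintype V] {G : SimpleGraph V} {w : Sym2 V → ℝ} {i j : V}
    (h : G.Adj i j) : w s(i,j) ≤ matchVal G w {i, j} := by
  have hM : IsMatching G {s(i,j)} := by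
    constructor
    · intro e he
      rw [Finset.mem_singleton] at he; subst he
      exact G.mem_edgeSet.2 h
    · intro e he f hf hef
      rw [Finset.mem_singleton] at he hf
      exact absurd (he.trans hf.symm) hef
  have hS : EdgesIn {i, j} {s(i,j)} := by
    intro e he v hv
    rw [Finset.mem_singleton] at he; subst he
    rcases Sym2.mem_iff.1 hv with rfl | rfl <;> simp
  have := le_matchVal (w := w) hM hS
  simpa [mWeight] using this

/-- vertices of an edge, as a finset. -/
noncomputable def vertsOf [Fintype V] (e : Sym2 V) : Finset V :=
  Finset.univ.filter (· ∈ e)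

lemma vertsOf_mk [Fintype V] (a b : V) : vertsOf s(a,b) = {a, b} := by
  ext v
  simp [vertsOf, Sym2.mem_iff]

lemma sum_vertsOf [Fintype V] {a b : V} (h : a ≠ b) (x : V → ℝ) :
    ∑ v ∈ vertsOf s(a,b), x v = x a + x b := by
  rw [vertsOf_mk, Finset.sum_pair h]

lemma matching_vertsOf_disjoint [Fintype V] {G : SimpleGraph V} {M : Finset (Sym2 V)}
    (hM : IsMatching G M) : (↑M : Set (Sym2 V)).PairwiseDisjoint vertsOf := by
  intro e he f hf hef
  simp only [Function.onFun]
  rw [Finset.disjoint_left]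
  intro v hv hv'
  simp only [vertsOf, Finset.mem_filter] at hv hv'
  exact hM.2 e he f hf hef v hv.2 hv'.2

/-- weight of a matching inside `S` is at most the sum of `x` over `S`, provided every
edge satisfies `w(ij) ≤ x i + x j` and `x ≥ 0`. -/
lemma mWeight_le_sum [Fintype V] {G : SimpleGraph V} {w : Sym2 V → ℝ} {S : Finset V}
    {M : Finset (Sym2 V)} {x : V → ℝ} (hM : IsMatching G M) (hS : EdgesIn S M)
    (hx : ∀ i j : V, G.Adj i j → w s(i,j) ≤ x i + x j) (hx0 : ∀ i, 0 ≤ x i) :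
    mWeight w M ≤ ∑ i ∈ S, x i := by
  have h1 : mWeight w M ≤ ∑ e ∈ M, ∑ v ∈ vertsOf e, x v := by
    apply Finset.sum_le_sum
    intro e he
    induction e using Sym2.ind with
    | _ a b =>
      have hadj : G.Adj a b := G.mem_edgeSet.1 (hM.1 _ he)
      rw [sum_vertsOf hadj.ne x]
      exact hx a b hadj
  have h2 : ∑ e ∈ M, ∑ v ∈ vertsOf e, x v = ∑ v ∈ M.biUnion vertsOf, x v :=
    (Finset.sum_biUnion (matching_vertsOf_disjoint hM)).symm
  have h3 : ∑ v ∈ M.biUnion vertsOf, x v ≤ ∑ v ∈ S, x v := by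
    apply Finset.sum_le_sum_of_subset_of_nonneg
    · intro v hv
      rcases Finset.mem_biUnion.1 hv with ⟨e, he, hve⟩
      simp only [vertsOf, Finset.mem_filter] at hve
      exact hS e he v hve.2
    · intro v _ _; exact hx0 v
  calc mWeight w M ≤ _ := h1
    _ = _ := h2
    _ ≤ _ := h3

/-- ordered pairs forming an edge. -/
noncomputable def pairsOf [Fintype V] (e : Sym2 V) : Finset (V × V) :=
  (Finset.univ ×ˢ Finset.univ).filter (fun z => s(z.1, z.2) = e)

lemma pairsOf_mk [Fintype V] {a b : V} (h : a ≠ b) :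
    pairsOf s(a,b) = {(a,b), (b,a)} := by
  ext z
  simp only [pairsOf, Finset.mem_filter, Finset.mem_product, Finset.mem_univ, true_and,
    Finset.mem_insert, Finset.mem_singleton, Sym2.eq_iff, Prod.ext_iff]

/-- total payoffs sum to the weight of the matching. -/
lemma sum_totalPayoff [Fintype V] {G : SimpleGraph V} {w : Sym2 V → ℝ}
    {M : Finset (Sym2 V)} {p : V → V → ℝ} (hsol : IsSolution G w M p) :
    ∑ i, totalPayoff p i = mWeight w M := by
  have hpair : ∀ e ∈ M, ∑ z ∈ pairsOf e, p z.1 z.2 = w e := by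
    intro e he
    induction e using Sym2.ind with
    | _ a b =>
      have hadj : G.Adj a b := G.mem_edgeSet.1 (hsol.1.1 _ he)
      rw [pairsOf_mk hadj.ne, Finset.sum_pair (by simp [Prod.ext_iff, hadj.ne])]
      exact (hsol.2.1 a b he).2.2
  have hdisj : (↑M : Set (Sym2 V)).PairwiseDisjoint pairsOf := by
    intro e he f hf hef
    simp only [Function.onFun]
    rw [Finset.disjoint_left]
    intro z hz hz'
    simp only [pairsOf, Finset.mem_filter] at hz hz'
    exact hef (hz.2.symm.trans hz'.2)
  calc ∑ i, totalPayoff p i = ∑ z ∈ Finset.univ ×ˢ Finset.univ, p z.1 z.2 := by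
        rw [Finset.sum_product]
        rfl
    _ = ∑ z ∈ (Finset.univ ×ˢ Finset.univ).filter (fun z => s(z.1, z.2) ∈ M),
          p z.1 z.2 := by
        rw [Finset.sum_filter_of_ne]
        intro z _ hz
        by_contra hmem
        exact hz (hsol.2.2 z.1 z.2 hmem)
    _ = ∑ z ∈ M.biUnion pairsOf, p z.1 z.2 := by
        congr 1
        ext z
        simp only [Finset.mem_filter, Finset.mem_product, Finset.mem_univ, true_and,
          Finset.mem_biUnion, pairsOf]
        constructor
        · intro h; exact ⟨s(z.1, z.2), h, rfl⟩
        · rintro ⟨e, he, hz⟩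
          rw [hz]; exact he
    _ = ∑ e ∈ M, ∑ z ∈ pairsOf e, p z.1 z.2 := Finset.sum_biUnion hdisj
    _ = ∑ e ∈ M, w e := Finset.sum_congr rfl hpair
    _ = mWeight w M := rfl

/-- for a bipartite instance `(G,w)`, a vector `x` is a core allocation of
the assignment game on `(G,w)` if and only if there is a stable solution `(M,p)` of the
Stable Marriage with Payments instance `(G,w)` whose total pay-off vector equals `x`. -/
theorem statement2 [Fintype V] (G : SimpleGraph V) (w : Sym2 V → ℝ)
    (hw : ∀ e ∈ G.edgeSet, 0 < w e) (A : Set V)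
    (hbip : ∀ i j : V, G.Adj i j → (i ∈ A ↔ j ∉ A)) (x : V → ℝ) :
    InCore (matchVal G w) x ↔
      ∃ (M : Finset (Sym2 V)) (p : V → V → ℝ),
        IsStable G w M p ∧ ∀ i : V, totalPayoff p i = x i := by
  constructor
  · -- core → stable solution
    rintro ⟨hN, hcore⟩
    -- x is nonnegative
    have hx0 : ∀ i, 0 ≤ x i := by
      intro i
      have := hcore {i}
      simp only [Finset.sum_singleton] at this
      exact le_trans (matchVal_nonneg G w {i}) this
    -- every edge satisfies w(ij) ≤ x i + x j
    have hedge : ∀ i j : V, G.Adj i j → w s(i,j) ≤ x i + x j := by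
      intro i j hadj
      have h1 := single_edge_le (w := w) hadj
      have h2 := hcore {i, j}
      rw [Finset.sum_pair hadj.ne] at h2
      linarith
    obtain ⟨M, hM, hMS, hmax⟩ := exists_max_matching G w
    -- the covered vertices
    set C : Finset V := M.biUnion vertsOf with hC
    have hsum_eq : ∑ e ∈ M, ∑ v ∈ vertsOf e, x v = ∑ v ∈ C, x v :=
      (Finset.sum_biUnion (matching_vertsOf_disjoint hM)).symm
    -- total slack is zero
    have hwM : mWeight w M = ∑ i, x i := by
      rw [hN, hmax]
    have hslack : ∑ e ∈ M, (∑ v ∈ vertsOf e, x v - w e) + ∑ v ∈ Finset.univ \ C, x v = 0 := by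
      have hCsub : C ⊆ Finset.univ := Finset.subset_univ C
      have hsplit : ∑ v ∈ C, x v + ∑ v ∈ Finset.univ \ C, x v = ∑ i, x i := by
        rw [add_comm, Finset.sum_sdiff hCsub]
      rw [Finset.sum_sub_distrib, hsum_eq]
      have : ∑ e ∈ M, w e = mWeight w M := rfl
      rw [this, hwM]
      linarith
    have hslack1 : ∀ e ∈ M, ∑ v ∈ vertsOf e, x v - w e = 0 := by
      have hterm1 : ∀ e ∈ M, 0 ≤ ∑ v ∈ vertsOf e, x v - w e := by
        intro e he
        induction e using Sym2.ind with
        | _ a b =>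
          have hadj : G.Adj a b := G.mem_edgeSet.1 (hM.1 _ he)
          rw [sum_vertsOf hadj.ne x]
          have := hedge a b hadj
          linarith
      have hterm2 : 0 ≤ ∑ v ∈ Finset.univ \ C, x v :=
        Finset.sum_nonneg fun v _ => hx0 v
      have hsum1 : ∑ e ∈ M, (∑ v ∈ vertsOf e, x v - w e) = 0 := by
        have h1 : 0 ≤ ∑ e ∈ M, (∑ v ∈ vertsOf e, x v - w e) :=
          Finset.sum_nonneg hterm1
        linarith
      exact (Finset.sum_eq_zero_iff_of_nonneg hterm1).1 hsum1
    have huncov : ∀ v, v ∉ C → x v = 0 := by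
      have hterm1 : 0 ≤ ∑ e ∈ M, (∑ v ∈ vertsOf e, x v - w e) :=
        Finset.sum_nonneg (by
          intro e he
          induction e using Sym2.ind with
          | _ a b =>
            have hadj : G.Adj a b := G.mem_edgeSet.1 (hM.1 _ he)
            rw [sum_vertsOf hadj.ne x]
            have := hedge a b hadj
            linarith)
      have hterm2 : 0 ≤ ∑ v ∈ Finset.univ \ C, x v :=
        Finset.sum_nonneg fun v _ => hx0 v
      have hsum2 : ∑ v ∈ Finset.univ \ C, x v = 0 := by linarith
      intro v hv
      have := (Finset.sum_eq_zero_iff_of_nonneg (fun v _ => hx0 v)).1 hsum2 v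
        (Finset.mem_sdiff.2 ⟨Finset.mem_univ v, hv⟩)
      exact this
    -- matched edges split exactly
    have hmatched : ∀ a b : V, s(a,b) ∈ M → x a + x b = w s(a,b) := by
      intro a b hab
      have hadj : G.Adj a b := G.mem_edgeSet.1 (hM.1 _ hab)
      have := hslack1 _ hab
      rw [sum_vertsOf hadj.ne x] at this
      linarith
    -- define the payoffs
    set p : V → V → ℝ := fun i j => if s(i,j) ∈ M then x i else 0 with hp
    have hpt : ∀ i, totalPayoff p i = x i := by
      intro i
      by_cases hi : i ∈ C
      · rcases Finset.mem_biUnion.1 hi with ⟨e, he, hie⟩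
        simp only [vertsOf, Finset.mem_filter] at hie
        rcases Sym2.mem_iff_exists.1 hie.2 with ⟨j0, rfl⟩
        have hadj : G.Adj i j0 := G.mem_edgeSet.1 (hM.1 _ he)
        have hunique : ∀ j : V, s(i,j) ∈ M → j = j0 := by
          intro j hj
          by_contra hne
          have hedne : s(i,j) ≠ s(i,j0) := fun h => hne (Sym2.congr_right.1 h)
          exact hM.2 _ hj _ he hedne i (Sym2.mem_mk_left i j) (Sym2.mem_mk_left i j0)
        rw [totalPayoff]
        rw [Finset.sum_eq_single j0]
        · simp [hp, he]
        · intro j _ hj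
          simp only [hp]
          rw [if_neg]
          intro hmem
          exact hj (hunique j hmem)
        · intro h; exact absurd (Finset.mem_univ j0) h
      · have : ∀ j, p i j = 0 := by
          intro j
          simp only [hp]
          rw [if_neg]
          intro hmem
          apply hi
          exact Finset.mem_biUnion.2 ⟨s(i,j), hmem, by
            simp [vertsOf, Sym2.mem_mk_left]⟩
        rw [totalPayoff]
        simp only [this, Finset.sum_const_zero]
        exact (huncov i hi).symm
    refine ⟨M, p, ⟨⟨hM, ?_, ?_⟩, ?_⟩, hpt⟩
    · intro i j hij
      have hadj : G.Adj i j := G.mem_edgeSet.1 (hM.1 _ hij)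
      have hji : s(j,i) ∈ M := by rwa [Sym2.eq_swap]
      refine ⟨by simp [hp, hij, hx0 i], by simp [hp, hji, hx0 j], ?_⟩
      simp only [hp, if_pos hij, if_pos hji]
      exact hmatched i j hij
    · intro i j hij
      simp [hp, hij]
    · intro i j hadj hij
      rw [hpt i, hpt j]
      exact hedge i j hadj
  · -- stable solution → core
    rintro ⟨M, p, ⟨⟨hM, hsplit, hzero⟩, hstab⟩, hpt⟩
    have hp0 : ∀ i j, 0 ≤ p i j := by
      intro i j
      by_cases h : s(i,j) ∈ M
      · exact (hsplit i j h).1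
      · rw [hzero i j h]
    have hx0 : ∀ i, 0 ≤ x i := by
      intro i
      rw [← hpt i, totalPayoff]
      exact Finset.sum_nonneg fun j _ => hp0 i j
    have hedge : ∀ i j : V, G.Adj i j → w s(i,j) ≤ x i + x j := by
      intro i j hadj
      by_cases h : s(i,j) ∈ M
      · have h1 : p i j ≤ x i := by
          rw [← hpt i, totalPayoff]
          exact Finset.single_le_sum (fun k _ => hp0 i k) (Finset.mem_univ j)
        have h2 : p j i ≤ x j := by
          rw [← hpt j, totalPayoff]
          exact Finset.single_le_sum (fun k _ => hp0 j k) (Finset.mem_univ i)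
        have := (hsplit i j h).2.2
        linarith
      · have := hstab i j hadj h
        rw [hpt i, hpt j] at this
        exact this
    have hub : ∀ S : Finset V, matchVal G w S ≤ ∑ i ∈ S, x i := by
      intro S
      apply matchVal_le
      intro M' hM' hS'
      exact mWeight_le_sum hM' hS' hedge hx0
    constructor
    · have h1 : ∑ i, x i = mWeight w M := by
        rw [← sum_totalPayoff ⟨hM, hsplit, hzero⟩]
        exact Finset.sum_congr rfl fun i _ => (hpt i).symm
      have h2 : mWeight w M ≤ matchVal G w Finset.univ :=
        le_matchVal hM (fun e _ v _ => Finset.mem_univ v)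
      have h3 := hub Finset.univ
      linarith
    · exact hub

end MatchingGames
end

section
/- For every finite simple graph G=(V,E) with positive edge weights w, there exists a half-matching of G whose weight equals the maximum of w(f) over all fractional matchings f of G; in other words, the maximum weight of a fractional matching is always attained by a half-matching. -/
open scoped Classical
open Finset

namespace MatchingGames

variable {V : Type*}

/-- `f` is a fractional matching of `G`: it is supported on the edges of `G`, takes
values in `[0,1]`, and the values on the edges at any vertex sum to at most `1`. -/
def IsFractionalMatching [Fintype V] [DecidableEq V] (G : SimpleGraph V)
    (f : Sym2 V → ℝ) : Prop :=
  (∀ e, e ∉ G.edgeSet → f e = 0) ∧ (∀ e, 0 ≤ f e ∧ f e ≤ 1) ∧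
    ∀ i : V, (∑ e ∈ Finset.univ.filter (fun e : Sym2 V => i ∈ e), f e) ≤ 1

/-- a half-matching is a fractional matching taking values in `{0, 1/2, 1}`. -/
def IsHalfMatching [Fintype V] [DecidableEq V] (G : SimpleGraph V)
    (f : Sym2 V → ℝ) : Prop :=
  IsFractionalMatching G f ∧ ∀ e, f e = 0 ∨ f e = 1 / 2 ∨ f e = 1

/-- the weight `w(f) = Σ_e w(e) f(e)` of a fractional matching `f`. -/
noncomputable def fWeight [Fintype V] [DecidableEq V] (w f : Sym2 V → ℝ) : ℝ :=
  ∑ e : Sym2 V, w e * f e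


section Aux
open Filter Topology
variable [Fintype V] [DecidableEq V]

lemma continuous_fWeight (w : Sym2 V → ℝ) : Continuous (fun f : Sym2 V → ℝ => fWeight w f) := by
  unfold fWeight
  exact continuous_finset_sum _ fun e _ => continuous_const.mul (continuous_apply e)

lemma fm_isClosed (G : SimpleGraph V) : IsClosed {f : Sym2 V → ℝ | IsFractionalMatching G f} := by
  have h1 : {f : Sym2 V → ℝ | IsFractionalMatching G f} =
      (⋂ e ∈ {e | e ∉ G.edgeSet}, {f : Sym2 V → ℝ | f e = 0}) ∩
      ((⋂ e : Sym2 V, {f : Sym2 V → ℝ | 0 ≤ f e ∧ f e ≤ 1}) ∩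
       (⋂ i : V, {f : Sym2 V → ℝ | (∑ e ∈ Finset.univ.filter (fun e : Sym2 V => i ∈ e), f e) ≤ 1})) := by
    ext f
    simp [IsFractionalMatching, Set.mem_iInter, forall_and]
  rw [h1]
  refine IsClosed.inter ?_ (IsClosed.inter ?_ ?_)
  · exact isClosed_biInter fun e _ => isClosed_eq (continuous_apply e) continuous_const
  · exact isClosed_iInter fun e => IsClosed.inter
      (isClosed_le continuous_const (continuous_apply e))
      (isClosed_le (continuous_apply e) continuous_const)
  · exact isClosed_iInter fun i => isClosed_le
      (continuous_finset_sum _ fun e _ => continuous_apply e) continuous_const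

lemma fm_isCompact (G : SimpleGraph V) : IsCompact {f : Sym2 V → ℝ | IsFractionalMatching G f} := by
  have hbox : IsCompact (Set.pi Set.univ fun _ : Sym2 V => Set.Icc (0:ℝ) 1) :=
    isCompact_univ_pi fun _ => isCompact_Icc
  refine hbox.of_isClosed_subset (fm_isClosed G) ?_
  intro f hf
  exact fun e _ => ⟨(hf.2.1 e).1, (hf.2.1 e).2⟩

lemma fm_zero (G : SimpleGraph V) : IsFractionalMatching G (0 : Sym2 V → ℝ) := by
  refine ⟨fun e _ => rfl, fun e => ⟨le_refl _, zero_le_one⟩, fun i => ?_⟩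
  simp


lemma fm_perturb (G : SimpleGraph V) (g D : Sym2 V → ℝ) (hg : IsFractionalMatching G g)
    (hsupp : ∀ e, ¬(0 < g e ∧ g e < 1) → D e = 0)
    (hker : ∀ v : V, (∑ e ∈ Finset.univ.filter (fun e : Sym2 V => v ∈ e), g e) = 1 →
      (∑ e ∈ Finset.univ.filter (fun e : Sym2 V => v ∈ e), D e) = 0) :
    ∀ᶠ ε in nhds (0:ℝ), IsFractionalMatching G (fun e => g e + ε * D e) := by
  have hb : ∀ᶠ ε in nhds (0:ℝ), ∀ e : Sym2 V, 0 ≤ g e + ε * D e ∧ g e + ε * D e ≤ 1 := by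
    rw [Filter.eventually_all]
    intro e
    by_cases hD : D e = 0
    · exact Eventually.of_forall fun ε => by simpa [hD] using hg.2.1 e
    · have he : 0 < g e ∧ g e < 1 := by
        by_contra h; exact hD (hsupp e h)
      have ht : Tendsto (fun ε : ℝ => g e + ε * D e) (nhds 0) (nhds (g e)) := by
        have : Tendsto (fun ε : ℝ => g e + ε * D e) (nhds 0) (nhds (g e + 0 * D e)) :=
          (tendsto_const_nhds.add ((tendsto_id.mul tendsto_const_nhds)))
        simpa using this
      have h1 := ht.eventually (eventually_gt_nhds he.1)
      have h2 := ht.eventually (eventually_lt_nhds he.2)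
      filter_upwards [h1, h2] with ε hε1 hε2
      exact ⟨le_of_lt hε1, le_of_lt hε2⟩
  have hv : ∀ᶠ ε in nhds (0:ℝ), ∀ i : V,
      (∑ e ∈ Finset.univ.filter (fun e : Sym2 V => i ∈ e), (g e + ε * D e)) ≤ 1 := by
    rw [Filter.eventually_all]
    intro i
    have hsplit : ∀ ε : ℝ, (∑ e ∈ Finset.univ.filter (fun e : Sym2 V => i ∈ e), (g e + ε * D e)) =
        (∑ e ∈ Finset.univ.filter (fun e : Sym2 V => i ∈ e), g e) +
        ε * (∑ e ∈ Finset.univ.filter (fun e : Sym2 V => i ∈ e), D e) := by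
      intro ε; rw [Finset.sum_add_distrib, Finset.mul_sum]
    rcases eq_or_lt_of_le (hg.2.2 i) with htight | hslack
    · refine Eventually.of_forall fun ε => ?_
      rw [hsplit, htight, hker i htight]
      simp
    · have ht : Tendsto (fun ε : ℝ =>
          (∑ e ∈ Finset.univ.filter (fun e : Sym2 V => i ∈ e), g e) +
          ε * (∑ e ∈ Finset.univ.filter (fun e : Sym2 V => i ∈ e), D e)) (nhds 0)
          (nhds (∑ e ∈ Finset.univ.filter (fun e : Sym2 V => i ∈ e), g e)) := by
        have : Tendsto (fun ε : ℝ =>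
            (∑ e ∈ Finset.univ.filter (fun e : Sym2 V => i ∈ e), g e) +
            ε * (∑ e ∈ Finset.univ.filter (fun e : Sym2 V => i ∈ e), D e)) (nhds 0)
            (nhds ((∑ e ∈ Finset.univ.filter (fun e : Sym2 V => i ∈ e), g e) +
              0 * (∑ e ∈ Finset.univ.filter (fun e : Sym2 V => i ∈ e), D e))) :=
          tendsto_const_nhds.add (tendsto_id.mul tendsto_const_nhds)
        simpa using this
      have h1 := ht.eventually (eventually_lt_nhds hslack)
      filter_upwards [h1] with ε hε
      rw [hsplit]; exact le_of_lt hε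
  filter_upwards [hb, hv] with ε hbε hvε
  refine ⟨fun e he => ?_, hbε, hvε⟩
  have h0 : g e = 0 := hg.1 e he
  have hD : D e = 0 := hsupp e (by rw [h0]; simp)
  simp only []; rw [h0, hD]; ring


lemma exists_direction (G : SimpleGraph V) (g : Sym2 V → ℝ) (hg : IsFractionalMatching G g)
    (e0 : Sym2 V) (h00 : 0 < g e0) (h01 : g e0 < 1) (hhalf : g e0 ≠ 1/2) :
    ∃ D : Sym2 V → ℝ, D ≠ 0 ∧ (∀ e, ¬(0 < g e ∧ g e < 1) → D e = 0) ∧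
      (∀ v : V, (∑ e ∈ Finset.univ.filter (fun e : Sym2 V => v ∈ e), g e) = 1 →
        (∑ e ∈ Finset.univ.filter (fun e : Sym2 V => v ∈ e), D e) = 0) := by
  classical
  set S : Finset (Sym2 V) := Finset.univ.filter (fun e => 0 < g e ∧ g e < 1) with hS
  have memS : ∀ e : Sym2 V, e ∈ S ↔ (0 < g e ∧ g e < 1) := by
    intro e; simp [hS]
  set T : Finset V := Finset.univ.filter (fun v =>
      (∑ e ∈ Finset.univ.filter (fun e : Sym2 V => v ∈ e), g e) = 1 ∧ ∃ e ∈ S, v ∈ e) with hT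
  have memT : ∀ v : V, v ∈ T ↔
      ((∑ e ∈ Finset.univ.filter (fun e : Sym2 V => v ∈ e), g e) = 1 ∧ ∃ e ∈ S, v ∈ e) := by
    intro v; simp [hT]
  -- nat sum helper
  have hnat : ∀ A : Finset (Sym2 V), (∀ e ∈ A, g e = 0 ∨ g e = 1) →
      ∃ k : ℕ, (∑ e ∈ A, g e) = k := by
    intro A hA
    refine ⟨(A.filter (fun e => g e = 1)).card, ?_⟩
    rw [← Finset.sum_filter_add_sum_filter_not A (fun e => g e = 1) g]
    have hz : (∑ e ∈ A.filter (fun e => ¬ g e = 1), g e) = 0 := by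
      refine Finset.sum_eq_zero fun e he => ?_
      have := Finset.mem_filter.mp he
      rcases hA e this.1 with h | h
      · exact h
      · exact absurd h this.2
    have ho : (∑ e ∈ A.filter (fun e => g e = 1), g e) =
        (A.filter (fun e => g e = 1)).card := by
      rw [Finset.sum_congr rfl (fun e he => (Finset.mem_filter.mp he).2)]
      simp
    rw [hz, ho, add_zero]
  -- splitting the tight sum
  have hsplit : ∀ v : V, ∃ k : ℕ,
      (∑ e ∈ Finset.univ.filter (fun e : Sym2 V => v ∈ e), g e) =
      (∑ e ∈ S.filter (fun e => v ∈ e), g e) + k := by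
    intro v
    have h1 := Finset.sum_filter_add_sum_filter_not
      (Finset.univ.filter (fun e : Sym2 V => v ∈ e)) (fun e => e ∈ S) g
    have h2 : (Finset.univ.filter (fun e : Sym2 V => v ∈ e)).filter (fun e => e ∈ S) =
        S.filter (fun e => v ∈ e) := by
      ext e
      simp only [Finset.mem_filter, Finset.mem_univ, true_and]
      tauto
    obtain ⟨k, hk⟩ := hnat
      ((Finset.univ.filter (fun e : Sym2 V => v ∈ e)).filter (fun e => ¬ e ∈ S))
      (by
        intro e he
        have heS : ¬ e ∈ S := (Finset.mem_filter.mp he).2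
        rw [memS] at heS
        push_neg at heS
        rcases (hg.2.1 e).1.eq_or_lt with h | h
        · exact Or.inl h.symm
        · exact Or.inr (le_antisymm (hg.2.1 e).2 (heS h))
      )
    exact ⟨k, by rw [← h1, h2, hk]⟩
  -- degree at tight vertices ≥ 2
  have hdeg : ∀ v : V, (∑ e ∈ Finset.univ.filter (fun e : Sym2 V => v ∈ e), g e) = 1 →
      ∀ e ∈ S, v ∈ e → 2 ≤ (S.filter (fun e => v ∈ e)).card := by
    intro v htv e heS hev
    by_contra hlt
    push_neg at hlt
    have hmem : e ∈ S.filter (fun e => v ∈ e) := Finset.mem_filter.mpr ⟨heS, hev⟩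
    have hone : (S.filter (fun e => v ∈ e)).card = 1 := by
      have : 1 ≤ (S.filter (fun e => v ∈ e)).card := Finset.card_pos.mpr ⟨e, hmem⟩
      omega
    have hsing : S.filter (fun e => v ∈ e) = {e} :=
      Finset.eq_singleton_iff_unique_mem.mpr ⟨hmem, fun f hf => by
        have := Finset.card_le_one.mp (le_of_eq hone) f hf e hmem
        exact this⟩
    obtain ⟨k, hk⟩ := hsplit v
    rw [htv, hsing, Finset.sum_singleton] at hk
    have hge := (memS e).mp heS
    rcases Nat.eq_zero_or_pos k with rfl | hkpos
    · simp at hk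
      rw [← hk] at hge
      exact lt_irrefl _ hge.2
    · have : (1:ℝ) ≤ k := by exact_mod_cast hkpos
      nlinarith [hge.1]
  -- pair sum at tight degree-2 vertices
  have hpair : ∀ v : V, (∑ e ∈ Finset.univ.filter (fun e : Sym2 V => v ∈ e), g e) = 1 →
      ∀ e f : Sym2 V, e ≠ f → S.filter (fun e => v ∈ e) = {e, f} → g e + g f = 1 := by
    intro v htv e f hef hfil
    obtain ⟨k, hk⟩ := hsplit v
    rw [htv, hfil, Finset.sum_pair hef] at hk
    have he : e ∈ S := by
      have : e ∈ S.filter (fun e => v ∈ e) := by rw [hfil]; simp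
      exact (Finset.mem_filter.mp this).1
    have hf : f ∈ S := by
      have : f ∈ S.filter (fun e => v ∈ e) := by rw [hfil]; simp
      exact (Finset.mem_filter.mp this).1
    have hge := (memS e).mp he
    have hgf := (memS f).mp hf
    have hk0 : k = 0 := by
      by_contra hne
      have : (1:ℝ) ≤ k := by exact_mod_cast Nat.one_le_iff_ne_zero.mpr hne
      nlinarith [hge.1, hgf.1]
    rw [hk0] at hk
    simpa using hk.symm
  -- reduction: it suffices to kill the sums over S-edges at T-vertices
  have hred : ∀ D : Sym2 V → ℝ, (∀ e, e ∉ S → D e = 0) →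
      (∀ v ∈ T, (∑ e ∈ S.filter (fun e => v ∈ e), D e) = 0) →
      (∀ v : V, (∑ e ∈ Finset.univ.filter (fun e : Sym2 V => v ∈ e), g e) = 1 →
        (∑ e ∈ Finset.univ.filter (fun e : Sym2 V => v ∈ e), D e) = 0) := by
    intro D hDsupp hDT v htv
    have hsub : S.filter (fun e => v ∈ e) ⊆ Finset.univ.filter (fun e : Sym2 V => v ∈ e) := by
      intro e he; simp [Finset.mem_filter.mp he |>.2]
    have hzero : ∀ e ∈ Finset.univ.filter (fun e : Sym2 V => v ∈ e),
        e ∉ S.filter (fun e => v ∈ e) → D e = 0 := by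
      intro e he hne
      apply hDsupp
      intro heS
      exact hne (Finset.mem_filter.mpr ⟨heS, (Finset.mem_filter.mp he).2⟩)
    rw [← Finset.sum_subset hsub hzero]
    by_cases hvT : v ∈ T
    · exact hDT v hvT
    · have : S.filter (fun e => v ∈ e) = ∅ := by
        rw [Finset.filter_eq_empty_iff]
        intro e heS hev
        exact hvT ((memT v).mpr ⟨htv, e, heS, hev⟩)
      rw [this, Finset.sum_empty]
  -- incidence linear map from S-edges to tight vertices
  let A : ({e // e ∈ S} → ℝ) →ₗ[ℝ] ({v // v ∈ T} → ℝ) :=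
    { toFun := fun d v => ∑ e ∈ Finset.univ.filter (fun e : {e // e ∈ S} => (v : V) ∈ (e : Sym2 V)), d e
      map_add' := fun d d' => by
        funext v
        simp [Finset.sum_add_distrib]
      map_smul' := fun c d => by
        funext v
        simp [Finset.mul_sum] }
  by_cases hinj : Function.Injective A
  · -- rigid case: explicit direction 2g - 1
    have hSedge : ∀ e ∈ S, e ∈ G.edgeSet := by
      intro e heS
      by_contra hne
      have := hg.1 e hne
      have := ((memS e).mp heS).1
      linarith
    have hcard : S.card ≤ T.card := by
      have h := LinearMap.finrank_le_finrank_of_injective hinj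
      rwa [Module.finrank_fintype_fun_eq_card, Module.finrank_fintype_fun_eq_card,
        Fintype.card_coe, Fintype.card_coe] at h
    have hdc : (∑ v ∈ T, (S.filter (fun e => v ∈ e)).card) =
        ∑ e ∈ S, (T.filter (fun v => v ∈ e)).card := by
      simp_rw [Finset.card_filter]
      exact Finset.sum_comm
    have hcnt2 : ∀ e ∈ S, (T.filter (fun v => v ∈ e)).card ≤ 2 := by
      intro e
      induction e using Sym2.inductionOn with
      | hf a b =>
        intro _
        have hsub : T.filter (fun v => v ∈ (s(a, b) : Sym2 V)) ⊆ {a, b} := by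
          intro v hv
          have := (Finset.mem_filter.mp hv).2
          rw [Sym2.mem_iff] at this
          rcases this with h | h <;> simp [h]
        exact (Finset.card_le_card hsub).trans ((Finset.card_insert_le _ _).trans (by simp))
    have h2T : ∀ v ∈ T, 2 ≤ (S.filter (fun e => v ∈ e)).card := by
      intro v hvT
      obtain ⟨htv, e, heS, hev⟩ := (memT v).mp hvT
      exact hdeg v htv e heS hev
    have hchain1 : 2 * T.card ≤ ∑ v ∈ T, (S.filter (fun e => v ∈ e)).card := by
      calc 2 * T.card = ∑ _v ∈ T, 2 := by rw [Finset.sum_const, smul_eq_mul, mul_comm]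
      _ ≤ _ := Finset.sum_le_sum h2T
    have hchain2 : (∑ e ∈ S, (T.filter (fun v => v ∈ e)).card) ≤ 2 * S.card := by
      calc (∑ e ∈ S, (T.filter (fun v => v ∈ e)).card) ≤ ∑ _e ∈ S, 2 := Finset.sum_le_sum hcnt2
      _ = 2 * S.card := by rw [Finset.sum_const, smul_eq_mul, mul_comm]
    have hdeg_eq : ∀ v ∈ T, (S.filter (fun e => v ∈ e)).card = 2 := by
      have heq : (∑ _v ∈ T, 2) = ∑ v ∈ T, (S.filter (fun e => v ∈ e)).card := by
        have h1 : (∑ _v ∈ T, 2) = 2 * T.card := by rw [Finset.sum_const, smul_eq_mul, mul_comm]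
        omega
      have := (Finset.sum_eq_sum_iff_of_le h2T).mp heq
      intro v hv
      exact (this v hv).symm
    have hcnt_eq : ∀ e ∈ S, (T.filter (fun v => v ∈ e)).card = 2 := by
      have heq : (∑ e ∈ S, (T.filter (fun v => v ∈ e)).card) = ∑ _e ∈ S, 2 := by
        have h1 : (∑ _e ∈ S, 2) = 2 * S.card := by rw [Finset.sum_const, smul_eq_mul, mul_comm]
        omega
      exact fun e he => (Finset.sum_eq_sum_iff_of_le hcnt2).mp heq e he
    refine ⟨fun e => if e ∈ S then 2 * g e - 1 else 0, ?_, ?_, ?_⟩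
    · intro h
      have he0S : e0 ∈ S := (memS e0).mpr ⟨h00, h01⟩
      have := congrFun h e0
      rw [if_pos he0S] at this
      simp only [Pi.zero_apply] at this
      apply hhalf
      linarith
    · intro e he
      show (if e ∈ S then 2 * g e - 1 else 0) = 0
      exact if_neg (fun hmem => he ((memS e).mp hmem))
    · refine hred _ (fun e he => if_neg he) ?_
      intro v hvT
      have htv := ((memT v).mp hvT).1
      obtain ⟨e, f, hef, hfil⟩ := Finset.card_eq_two.mp (hdeg_eq v hvT)
      have heS : e ∈ S := by
        have : e ∈ S.filter (fun e => v ∈ e) := by rw [hfil]; simp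
        exact (Finset.mem_filter.mp this).1
      have hfS : f ∈ S := by
        have : f ∈ S.filter (fun e => v ∈ e) := by rw [hfil]; simp
        exact (Finset.mem_filter.mp this).1
      rw [hfil, Finset.sum_pair hef, if_pos heS, if_pos hfS]
      have := hpair v htv e f hef hfil
      linarith
  · rw [Function.not_injective_iff] at hinj
    obtain ⟨d1, d2, hAd, hne⟩ := hinj
    set d := d1 - d2 with hd
    have hd0 : d ≠ 0 := sub_ne_zero.mpr hne
    have hAd0 : A d = 0 := by rw [hd, map_sub, hAd, sub_self]
    refine ⟨fun e => if h : e ∈ S then d ⟨e, h⟩ else 0, ?_, ?_, ?_⟩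
    · intro hzero
      apply hd0
      funext e
      have := congrFun hzero e.val
      rw [dif_pos e.2] at this
      simpa using this
    · intro e he
      show (if h : e ∈ S then d ⟨e, h⟩ else 0) = 0
      exact dif_neg (fun hmem => he ((memS e).mp hmem))
    · refine hred _ (fun e he => dif_neg he) ?_
      intro v hvT
      have lhs_eq : (∑ e ∈ S.filter (fun e => v ∈ e),
          (fun e => if h : e ∈ S then d ⟨e, h⟩ else 0) e) =
          ∑ e ∈ S, (if v ∈ e then (if h : e ∈ S then d ⟨e, h⟩ else 0) else 0) :=
        Finset.sum_filter _ _
      have rhs_eq : (∑ e ∈ Finset.univ.filter (fun e : {e // e ∈ S} => (v : V) ∈ (e : Sym2 V)),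
          d e) = ∑ e : {e // e ∈ S}, (if (v : V) ∈ (e : Sym2 V) then d e else 0) :=
        Finset.sum_filter _ _
      have mid : (∑ e : {e // e ∈ S}, (if (v : V) ∈ (e : Sym2 V) then d e else 0)) =
          ∑ e ∈ S, (if v ∈ e then (if h : e ∈ S then d ⟨e, h⟩ else 0) else 0) := by
        rw [← Finset.sum_coe_sort S
          (fun e => if v ∈ e then (if h : e ∈ S then d ⟨e, h⟩ else 0) else 0)]
        refine Finset.sum_congr rfl ?_
        intro e _
        by_cases hv : (v : V) ∈ (e : Sym2 V)
        · rw [if_pos hv, if_pos hv, dif_pos e.2]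
        · rw [if_neg hv, if_neg hv]
      rw [lhs_eq, ← mid, rhs_eq.symm]
      exact congrFun hAd0 ⟨v, hvT⟩


theorem fm_maxOn_halfintegral (G : SimpleGraph V) (w : Sym2 V → ℝ) :
    ∃ x : Sym2 V → ℝ, IsFractionalMatching G x ∧
      (∀ y : Sym2 V → ℝ, IsFractionalMatching G y → fWeight w y ≤ fWeight w x) ∧
      (∀ e, x e = 0 ∨ x e = 1 / 2 ∨ x e = 1) := by
  classical
  set P : Set (Sym2 V → ℝ) := {f | IsFractionalMatching G f} with hP
  have hPne : P.Nonempty := ⟨0, fm_zero G⟩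
  have hPcomp : IsCompact P := fm_isCompact G
  have hLcont : Continuous (fun f : Sym2 V → ℝ => fWeight w f) := continuous_fWeight w
  obtain ⟨g₀, hg₀P, hg₀max⟩ := hPcomp.exists_isMaxOn hPne hLcont.continuousOn
  set F : Set (Sym2 V → ℝ) := P ∩ {x | ∀ y ∈ P, fWeight w y ≤ fWeight w x} with hF
  have hFne : F.Nonempty := ⟨g₀, hg₀P, fun y hy => hg₀max hy⟩
  have hFclosed : IsClosed F := by
    have h2 : {x : Sym2 V → ℝ | ∀ y ∈ P, fWeight w y ≤ fWeight w x} =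
        ⋂ y ∈ P, {x : Sym2 V → ℝ | fWeight w y ≤ fWeight w x} := by
      ext x; simp
    refine (fm_isClosed G).inter ?_
    rw [h2]
    exact isClosed_biInter fun y _ => isClosed_le continuous_const hLcont
  have hFcomp : IsCompact F := hPcomp.of_isClosed_subset hFclosed Set.inter_subset_left
  obtain ⟨x, hx⟩ := hFcomp.extremePoints_nonempty hFne
  rw [mem_extremePoints] at hx
  have hxF : x ∈ F := hx.1
  have hxP : x ∈ P := hxF.1
  refine ⟨x, hxP, fun y hy => hxF.2 y hy, ?_⟩
  intro e0
  by_contra hbad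
  push_neg at hbad
  obtain ⟨hb0, hbh, hb1⟩ := hbad
  have h00 : 0 < x e0 := lt_of_le_of_ne (hxP.2.1 e0).1 (Ne.symm hb0)
  have h01 : x e0 < 1 := lt_of_le_of_ne (hxP.2.1 e0).2 hb1
  obtain ⟨D, hD0, hsupp, hker⟩ := exists_direction G x hxP e0 h00 h01 hbh
  have hev1 := fm_perturb G x D hxP hsupp hker
  have hev2 := fm_perturb G x (fun e => -D e) hxP
    (fun e he => by show -D e = 0; rw [hsupp e he]; ring)
    (fun v hv => by
      rw [Finset.sum_neg_distrib, hker v hv, neg_zero])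
  have hev : ∀ᶠ ε in nhds (0:ℝ), IsFractionalMatching G (fun e => x e + ε * D e) ∧
      IsFractionalMatching G (fun e => x e + ε * (-D e)) := hev1.and hev2
  have hev' : ∀ᶠ ε in nhdsWithin (0:ℝ) (Set.Ioi 0),
      ((IsFractionalMatching G (fun e => x e + ε * D e) ∧
       IsFractionalMatching G (fun e => x e + ε * (-D e))) ∧ 0 < ε) :=
    (hev.filter_mono nhdsWithin_le_nhds).and eventually_mem_nhdsWithin
  obtain ⟨ε, ⟨hfm2, hfm1⟩, hε⟩ := hev'.exists
  set x₁ : Sym2 V → ℝ := fun e => x e + ε * (-D e) with hx₁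
  set x₂ : Sym2 V → ℝ := fun e => x e + ε * D e with hx₂
  set t : ℝ := ∑ e : Sym2 V, w e * D e with htdef
  have hw2 : fWeight w x₂ = fWeight w x + ε * t := by
    unfold fWeight
    rw [htdef, Finset.mul_sum, ← Finset.sum_add_distrib]
    refine Finset.sum_congr rfl fun e _ => ?_
    rw [hx₂]; ring
  have hw1 : fWeight w x₁ = fWeight w x - ε * t := by
    unfold fWeight
    rw [htdef, Finset.mul_sum, sub_eq_add_neg, ← Finset.sum_neg_distrib,
      ← Finset.sum_add_distrib]
    refine Finset.sum_congr rfl fun e _ => ?_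
    rw [hx₁]; ring
  have hle2 : fWeight w x₂ ≤ fWeight w x := hxF.2 x₂ hfm2
  have hle1 : fWeight w x₁ ≤ fWeight w x := hxF.2 x₁ hfm1
  have ht0 : ε * t = 0 := by
    rw [hw2] at hle2
    rw [hw1] at hle1
    linarith
  have hx2F : x₂ ∈ F := ⟨hfm2, fun y hy => by
    rw [hw2, ht0, add_zero]; exact hxF.2 y hy⟩
  have hx1F : x₁ ∈ F := ⟨hfm1, fun y hy => by
    rw [hw1, ht0, sub_zero]; exact hxF.2 y hy⟩
  have hseg : x ∈ openSegment ℝ x₁ x₂ := by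
    refine ⟨1/2, 1/2, by norm_num, by norm_num, by norm_num, ?_⟩
    funext e
    simp only [Pi.add_apply, Pi.smul_apply, smul_eq_mul, hx₁, hx₂]
    ring
  have heq := hx.2 x₁ hx1F x₂ hx2F hseg
  obtain ⟨e, hDe⟩ := Function.ne_iff.mp hD0
  have := congrFun heq.2 e
  rw [hx₂] at this
  simp only [Pi.zero_apply] at this hDe
  have : ε * D e = 0 := by linarith [this]
  rcases mul_eq_zero.mp this with h | h
  · exact absurd h (ne_of_gt hε)
  · exact hDe h

end Aux


/-- the maximum weight of a fractional matching of `(G,w)` is always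
attained by a half-matching. -/
theorem statement4 [Fintype V] [DecidableEq V] (G : SimpleGraph V) (w : Sym2 V → ℝ)
    (hw : ∀ e ∈ G.edgeSet, 0 < w e) :
    ∃ f : Sym2 V → ℝ, IsHalfMatching G f ∧
      fWeight w f =
        sSup {t | ∃ g : Sym2 V → ℝ, IsFractionalMatching G g ∧ t = fWeight w g} := by
  classical
  obtain ⟨x, hxFM, hxmax, hxvals⟩ := fm_maxOn_halfintegral G w
  refine ⟨x, ⟨hxFM, hxvals⟩, ?_⟩
  have hgr : IsGreatest {t | ∃ g : Sym2 V → ℝ, IsFractionalMatching G g ∧ t = fWeight w g}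
      (fWeight w x) := by
    constructor
    · exact ⟨x, hxFM, rfl⟩
    · rintro s ⟨g, hgFM, rfl⟩
      exact hxmax g hgFM
  exact hgr.csSup_eq.symm

end MatchingGames
end

section
/- Let G=(V,E) be a finite simple graph with positive edge weights w, and let G^d be its duplicate: the bipartite graph on vertex set {i', i'' : i ∈ V} that has, for each edge ij ∈ E, the two edges i'j'' and i''j', each of weight w^d(i'j'') = w^d(i''j') = w(ij)/2. Then the maximum weight of a half-matching in (G,w) equals the maximum weight of a matching in (G^d, w^d). -/
open scoped Classical
open Finset

namespace MatchingGames

variable {V : Type*}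

/-- the duplicate `G^d` of `G`: a bipartite graph on two copies `i'` (= `inl i`) and
`i''` (= `inr i`) of every vertex `i` of `G`, where, for every edge `ij` of `G`, the
vertices `i'` and `j''` (and symmetrically `i''` and `j'`) are joined by an edge. -/
def dup (G : SimpleGraph V) : SimpleGraph (V ⊕ V) where
  Adj a c :=
    match a, c with
    | Sum.inl i, Sum.inr j => G.Adj i j
    | Sum.inr i, Sum.inl j => G.Adj j i
    | _, _ => False
  symm := by
    refine ⟨?_⟩
    rintro (i | i) (j | j) h
    · exact h.elim
    · exact h
    · exact h
    · exact h.elim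
  loopless := by
    refine ⟨?_⟩
    rintro (i | i) h <;> exact h

/-- the edge weighting `w^d` of the duplicate `G^d`: both copies `i'j''` and `i''j'` of
an edge `ij` of `G` receive weight `w(ij)/2`. -/
noncomputable def dupW (w : Sym2 V → ℝ) : Sym2 (V ⊕ V) → ℝ :=
  Sym2.lift ⟨fun a c =>
    match a, c with
    | Sum.inl i, Sum.inr j => w s(i, j) / 2
    | Sum.inr i, Sum.inl j => w s(j, i) / 2
    | _, _ => 0,
    by rintro (i | i) (j | j) <;> rfl⟩

/-! ### Auxiliary machinery -/

section Aux

lemma mem_of_eq_fst {p : V × V} {e : Sym2 V} (h : s(p.1, p.2) = e) : p.1 ∈ e := by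
  rw [← h]; exact Sym2.mem_mk_left _ _

lemma mem_of_eq_snd {p : V × V} {e : Sym2 V} (h : s(p.1, p.2) = e) : p.2 ∈ e := by
  rw [← h]; exact Sym2.mem_mk_right _ _

/-- degree of a vertex in an edge set -/
noncomputable def edeg [Fintype V] (H : Finset (Sym2 V)) (v : V) : ℕ :=
  (H.filter (fun e => v ∈ e)).card

lemma edeg_erase [Fintype V] (H : Finset (Sym2 V)) (e : Sym2 V) (v : V) :
    edeg (H.erase e) v = (if v ∈ e ∧ e ∈ H then edeg H v - 1 else edeg H v) := by
  unfold edeg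
  rw [Finset.filter_erase]
  split
  · next h => rw [Finset.card_erase_of_mem (Finset.mem_filter.mpr ⟨h.2, h.1⟩)]
  · next h =>
    rw [Finset.erase_eq_of_notMem]
    intro hmem
    rw [Finset.mem_filter] at hmem
    exact h ⟨hmem.2, hmem.1⟩

lemma not_mem_of_edeg_zero [Fintype V] {H : Finset (Sym2 V)} {v : V}
    (h : edeg H v = 0) {e : Sym2 V} (he : e ∈ H) : v ∉ e := by
  intro hv
  have : e ∈ H.filter (fun e => v ∈ e) := Finset.mem_filter.mpr ⟨he, hv⟩
  rw [edeg, Finset.card_eq_zero] at h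
  simp [h] at this

lemma one_le_edeg [Fintype V] {H : Finset (Sym2 V)} {v : V} {e : Sym2 V}
    (he : e ∈ H) (hv : v ∈ e) : 1 ≤ edeg H v :=
  Finset.card_pos.mpr ⟨e, Finset.mem_filter.mpr ⟨he, hv⟩⟩

lemma orient2 [Fintype V] : ∀ (n : ℕ) (H : Finset (Sym2 V)), H.card = n →
    (∀ e ∈ H, ¬ e.IsDiag) →
    (∀ v : V, edeg H v ≤ 2) →
    ∀ b c : V, edeg H b ≤ 1 → edeg H c ≤ 1 →
      (b ≠ c ∨ edeg H b = 0) →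
      ∃ o : Sym2 V → V × V,
        (∀ e ∈ H, s((o e).1, (o e).2) = e) ∧
        (∀ e ∈ H, ∀ f ∈ H, e ≠ f → (o e).1 ≠ (o f).1) ∧
        (∀ e ∈ H, ∀ f ∈ H, e ≠ f → (o e).2 ≠ (o f).2) ∧
        (∀ e ∈ H, (o e).2 ≠ b) ∧
        (∀ e ∈ H, (o e).1 ≠ c) := by
  intro n
  induction n using Nat.strong_induction_on with
  | _ n IH =>
    intro H hcard hdiag hdeg b c hb hc hbc
    rcases Finset.eq_empty_or_nonempty H with hH | hH
    · subst hH
      exact ⟨fun e => Quot.out e, by simp, by simp, by simp, by simp, by simp⟩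
    -- H nonempty
    have hbO : edeg H b = 0 ∨ edeg H b = 1 := by omega
    rcases hbO with hb0 | hb1
    case inr =>
      -- case A : edeg H b = 1
      have hbc' : b ≠ c := hbc.resolve_right (by omega)
      obtain ⟨e, he⟩ := Finset.card_pos.mp (by rw [← edeg] at *; omega :
        0 < (H.filter (fun e => b ∈ e)).card)
      rw [Finset.mem_filter] at he
      obtain ⟨heH, hbe⟩ := he
      obtain ⟨x, hex⟩ := Sym2.mem_iff_exists.mp hbe
      have hxb : b ≠ x := by
        intro h; apply hdiag e heH; rw [hex, ← h]; exact Sym2.mk_isDiag_iff.mpr rfl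
      set H' := H.erase e with hH'
      have hcard' : H'.card = n - 1 := by rw [hH', Finset.card_erase_of_mem heH, hcard]
      have hlt : n - 1 < n := by
        have : 0 < n := by rw [← hcard]; exact Finset.card_pos.mpr ⟨e, heH⟩
        omega
      have hdeg' : ∀ v, edeg H' v ≤ edeg H v := by
        intro v; rw [hH', edeg_erase]; split <;> omega
      have hxe : x ∈ e := by rw [hex]; exact Sym2.mem_mk_right _ _
      have hdx : edeg H' x ≤ 1 := by
        rw [hH', edeg_erase, if_pos ⟨hxe, heH⟩]
        have := hdeg x; omega
      have hdb0 : edeg H' b = 0 := by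
        rw [hH', edeg_erase, if_pos ⟨hbe, heH⟩]; omega
      have hside : x ≠ c ∨ edeg H' x = 0 := by
        by_cases hxc : x = c
        · right
          rw [hH', edeg_erase, if_pos ⟨hxe, heH⟩]
          have := one_le_edeg heH hxe
          subst hxc; omega
        · left; exact hxc
      obtain ⟨o', ho1, ho2, ho3, ho4, ho5⟩ :=
        IH (n-1) hlt H' hcard'
          (fun e' he' => hdiag e' (Finset.mem_of_mem_erase he'))
          (fun v => le_trans (hdeg' v) (hdeg v)) x c hdx
          (le_trans (hdeg' c) hc) hside
      refine ⟨fun e' => if e' = e then (b, x) else o' e', ?_, ?_, ?_, ?_, ?_⟩ <;> dsimp only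
      · intro e' he'
        by_cases h : e' = e
        · subst h; simp [hex]
        · rw [if_neg h]; exact ho1 e' (Finset.mem_erase.mpr ⟨h, he'⟩)
      · intro e1 h1 e2 h2 hne
        by_cases q1 : e1 = e <;> by_cases q2 : e2 = e
        · exact absurd (q1.trans q2.symm) hne
        · subst q1; rw [if_pos rfl, if_neg q2]
          have h2' : e2 ∈ H' := Finset.mem_erase.mpr ⟨q2, h2⟩
          intro heq
          refine not_mem_of_edeg_zero hdb0 h2' ?_
          have : b = (o' e2).1 := heq
          rw [this]; exact mem_of_eq_fst (ho1 e2 h2')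
        · subst q2; rw [if_neg q1, if_pos rfl]
          have h1' : e1 ∈ H' := Finset.mem_erase.mpr ⟨q1, h1⟩
          intro heq
          refine not_mem_of_edeg_zero hdb0 h1' ?_
          have : (o' e1).1 = b := heq
          rw [← this]; exact mem_of_eq_fst (ho1 e1 h1')
        · rw [if_neg q1, if_neg q2]
          exact ho2 e1 (Finset.mem_erase.mpr ⟨q1, h1⟩) e2 (Finset.mem_erase.mpr ⟨q2, h2⟩) hne
      · intro e1 h1 e2 h2 hne
        by_cases q1 : e1 = e <;> by_cases q2 : e2 = e
        · exact absurd (q1.trans q2.symm) hne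
        · subst q1; rw [if_pos rfl, if_neg q2]
          exact fun heq => ho4 e2 (Finset.mem_erase.mpr ⟨q2, h2⟩) heq.symm |>.elim
        · subst q2; rw [if_neg q1, if_pos rfl]
          exact ho4 e1 (Finset.mem_erase.mpr ⟨q1, h1⟩)
        · rw [if_neg q1, if_neg q2]
          exact ho3 e1 (Finset.mem_erase.mpr ⟨q1, h1⟩) e2 (Finset.mem_erase.mpr ⟨q2, h2⟩) hne
      · intro e' he'
        by_cases h : e' = e
        · subst h; rw [if_pos rfl]; exact fun heq => hxb heq.symm
        · rw [if_neg h]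
          have h' : e' ∈ H' := Finset.mem_erase.mpr ⟨h, he'⟩
          exact fun heq => not_mem_of_edeg_zero hdb0 h' (heq ▸ mem_of_eq_snd (ho1 e' h'))
      · intro e' he'
        by_cases h : e' = e
        · subst h; rw [if_pos rfl]; exact hbc'
        · rw [if_neg h]; exact ho5 e' (Finset.mem_erase.mpr ⟨h, he'⟩)
    case inl =>
      -- edeg H b = 0
      have hcO : edeg H c = 0 ∨ edeg H c = 1 := by omega
      rcases hcO with hc0 | hc1
      · -- Case C : both degree 0; pick any edge
        obtain ⟨e, heH⟩ := hH
        set u := (Quot.out e).1 with hu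
        set v := (Quot.out e).2 with hv
        have hout : s(u, v) = e := by rw [hu, hv]; exact Quot.out_eq e
        have huv : u ≠ v := by
          intro h; apply hdiag e heH; rw [← hout, h]; exact Sym2.mk_isDiag_iff.mpr rfl
        have hue : u ∈ e := mem_of_eq_fst hout
        have hve : v ∈ e := mem_of_eq_snd hout
        set H' := H.erase e with hH'
        have hcard' : H'.card = n - 1 := by
          rw [hH', Finset.card_erase_of_mem heH, hcard]
        have hlt : n - 1 < n := by
          have : 0 < n := by rw [← hcard]; exact Finset.card_pos.mpr ⟨e, heH⟩
          omega
        have hdeg' : ∀ z, edeg H' z ≤ edeg H z := by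
          intro z; rw [hH', edeg_erase]; split <;> omega
        have hdu : edeg H' u ≤ 1 := by
          rw [hH', edeg_erase, if_pos ⟨hue, heH⟩]; have := hdeg u; omega
        have hdv : edeg H' v ≤ 1 := by
          rw [hH', edeg_erase, if_pos ⟨hve, heH⟩]; have := hdeg v; omega
        have hb0' : edeg H' b = 0 := le_antisymm (le_trans (hdeg' b) (by omega)) (Nat.zero_le _)
        have hc0' : edeg H' c = 0 := le_antisymm (le_trans (hdeg' c) (by omega)) (Nat.zero_le _)
        obtain ⟨o', ho1, ho2, ho3, ho4, ho5⟩ :=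
          IH (n-1) hlt H' hcard'
            (fun e' he' => hdiag e' (Finset.mem_of_mem_erase he'))
            (fun z => le_trans (hdeg' z) (hdeg z)) u v hdu hdv (Or.inl huv)
        refine ⟨fun e' => if e' = e then (v, u) else o' e', ?_, ?_, ?_, ?_, ?_⟩ <;> dsimp only
        · intro e' he'
          by_cases h : e' = e
          · subst h; rw [if_pos rfl, ← hout]
            exact Sym2.eq_swap
          · rw [if_neg h]; exact ho1 e' (Finset.mem_erase.mpr ⟨h, he'⟩)
        · intro e1 h1 e2 h2 hne
          by_cases q1 : e1 = e <;> by_cases q2 : e2 = e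
          · exact absurd (q1.trans q2.symm) hne
          · subst q1; rw [if_pos rfl, if_neg q2]
            exact fun heq => ho5 e2 (Finset.mem_erase.mpr ⟨q2, h2⟩) heq.symm |>.elim
          · subst q2; rw [if_neg q1, if_pos rfl]
            exact ho5 e1 (Finset.mem_erase.mpr ⟨q1, h1⟩)
          · rw [if_neg q1, if_neg q2]
            exact ho2 e1 (Finset.mem_erase.mpr ⟨q1, h1⟩) e2 (Finset.mem_erase.mpr ⟨q2, h2⟩) hne
        · intro e1 h1 e2 h2 hne
          by_cases q1 : e1 = e <;> by_cases q2 : e2 = e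
          · exact absurd (q1.trans q2.symm) hne
          · subst q1; rw [if_pos rfl, if_neg q2]
            exact fun heq => ho4 e2 (Finset.mem_erase.mpr ⟨q2, h2⟩) heq.symm |>.elim
          · subst q2; rw [if_neg q1, if_pos rfl]
            exact ho4 e1 (Finset.mem_erase.mpr ⟨q1, h1⟩)
          · rw [if_neg q1, if_neg q2]
            exact ho3 e1 (Finset.mem_erase.mpr ⟨q1, h1⟩) e2 (Finset.mem_erase.mpr ⟨q2, h2⟩) hne
        · intro e' he'
          by_cases h : e' = e
          · subst h; rw [if_pos rfl]
            intro heq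
            exact not_mem_of_edeg_zero hb0 he' (by rw [← show (v,u).2 = u from rfl, heq] at hue; exact hue)
          · rw [if_neg h]
            have h' : e' ∈ H' := Finset.mem_erase.mpr ⟨h, he'⟩
            intro heq
            refine not_mem_of_edeg_zero hb0' h' ?_
            have : (o' e').2 = b := heq
            rw [← this]; exact mem_of_eq_snd (ho1 e' h')
        · intro e' he'
          by_cases h : e' = e
          · subst h; rw [if_pos rfl]
            intro heq
            exact not_mem_of_edeg_zero hc0 he' (by rw [← show (v,u).1 = v from rfl, heq] at hve; exact hve)
          · rw [if_neg h]
            have h' : e' ∈ H' := Finset.mem_erase.mpr ⟨h, he'⟩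
            intro heq
            refine not_mem_of_edeg_zero hc0' h' ?_
            have : (o' e').1 = c := heq
            rw [← this]; exact mem_of_eq_fst (ho1 e' h')
      · -- Case B : edeg H b = 0, edeg H c = 1
        have hbc' : b ≠ c := by intro h; rw [h] at hb0; omega
        obtain ⟨e, he⟩ := Finset.card_pos.mp (by rw [← edeg] at *; omega :
          0 < (H.filter (fun e => c ∈ e)).card)
        rw [Finset.mem_filter] at he
        obtain ⟨heH, hce⟩ := he
        obtain ⟨y, hey⟩ := Sym2.mem_iff_exists.mp hce
        have hyc : y ≠ c := by
          intro h; apply hdiag e heH; rw [hey, h]; exact Sym2.mk_isDiag_iff.mpr rfl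
        have hye : y ∈ e := by rw [hey]; exact Sym2.mem_mk_right _ _
        set H' := H.erase e with hH'
        have hcard' : H'.card = n - 1 := by
          rw [hH', Finset.card_erase_of_mem heH, hcard]
        have hlt : n - 1 < n := by
          have : 0 < n := by rw [← hcard]; exact Finset.card_pos.mpr ⟨e, heH⟩
          omega
        have hdeg' : ∀ z, edeg H' z ≤ edeg H z := by
          intro z; rw [hH', edeg_erase]; split <;> omega
        have hdy : edeg H' y ≤ 1 := by
          rw [hH', edeg_erase, if_pos ⟨hye, heH⟩]; have := hdeg y; omega
        have hb0' : edeg H' b = 0 := le_antisymm (le_trans (hdeg' b) (by omega)) (Nat.zero_le _)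
        have hc0' : edeg H' c = 0 := by
          rw [hH', edeg_erase, if_pos ⟨hce, heH⟩]; omega
        obtain ⟨o', ho1, ho2, ho3, ho4, ho5⟩ :=
          IH (n-1) hlt H' hcard'
            (fun e' he' => hdiag e' (Finset.mem_of_mem_erase he'))
            (fun z => le_trans (hdeg' z) (hdeg z)) b y (by omega) hdy (Or.inr hb0')
        refine ⟨fun e' => if e' = e then (y, c) else o' e', ?_, ?_, ?_, ?_, ?_⟩ <;> dsimp only
        · intro e' he'
          by_cases h : e' = e
          · subst h; rw [if_pos rfl, hey]
            exact Sym2.eq_swap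
          · rw [if_neg h]; exact ho1 e' (Finset.mem_erase.mpr ⟨h, he'⟩)
        · intro e1 h1 e2 h2 hne
          by_cases q1 : e1 = e <;> by_cases q2 : e2 = e
          · exact absurd (q1.trans q2.symm) hne
          · subst q1; rw [if_pos rfl, if_neg q2]
            exact fun heq => ho5 e2 (Finset.mem_erase.mpr ⟨q2, h2⟩) heq.symm |>.elim
          · subst q2; rw [if_neg q1, if_pos rfl]
            exact ho5 e1 (Finset.mem_erase.mpr ⟨q1, h1⟩)
          · rw [if_neg q1, if_neg q2]
            exact ho2 e1 (Finset.mem_erase.mpr ⟨q1, h1⟩) e2 (Finset.mem_erase.mpr ⟨q2, h2⟩) hne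
        · intro e1 h1 e2 h2 hne
          by_cases q1 : e1 = e <;> by_cases q2 : e2 = e
          · exact absurd (q1.trans q2.symm) hne
          · subst q1; rw [if_pos rfl, if_neg q2]
            have h2' : e2 ∈ H' := Finset.mem_erase.mpr ⟨q2, h2⟩
            intro heq
            refine not_mem_of_edeg_zero hc0' h2' ?_
            have : c = (o' e2).2 := heq
            rw [this]; exact mem_of_eq_snd (ho1 e2 h2')
          · subst q2; rw [if_neg q1, if_pos rfl]
            have h1' : e1 ∈ H' := Finset.mem_erase.mpr ⟨q1, h1⟩
            intro heq
            refine not_mem_of_edeg_zero hc0' h1' ?_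
            have : (o' e1).2 = c := heq
            rw [← this]; exact mem_of_eq_snd (ho1 e1 h1')
          · rw [if_neg q1, if_neg q2]
            exact ho3 e1 (Finset.mem_erase.mpr ⟨q1, h1⟩) e2 (Finset.mem_erase.mpr ⟨q2, h2⟩) hne
        · intro e' he'
          by_cases h : e' = e
          · subst h; rw [if_pos rfl]
            exact fun heq => hbc' heq.symm
          · rw [if_neg h]
            exact ho4 e' (Finset.mem_erase.mpr ⟨h, he'⟩)
        · intro e' he'
          by_cases h : e' = e
          · subst h; rw [if_pos rfl]; exact hyc
          · rw [if_neg h]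
            have h' : e' ∈ H' := Finset.mem_erase.mpr ⟨h, he'⟩
            intro heq
            refine not_mem_of_edeg_zero hc0' h' ?_
            have : (o' e').1 = c := heq
            rw [← this]; exact mem_of_eq_fst (ho1 e' h')
lemma orient0 [Fintype V] (H : Finset (Sym2 V))
    (hdiag : ∀ e ∈ H, ¬ e.IsDiag) (hdeg : ∀ v, edeg H v ≤ 2) :
    ∃ o : Sym2 V → V × V,
      (∀ e ∈ H, s((o e).1, (o e).2) = e) ∧
      (∀ e ∈ H, ∀ f ∈ H, e ≠ f → (o e).1 ≠ (o f).1) ∧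
      (∀ e ∈ H, ∀ f ∈ H, e ≠ f → (o e).2 ≠ (o f).2) := by
  rcases H.eq_empty_or_nonempty with h | ⟨e, heH⟩
  · subst h; exact ⟨fun e => Quot.out e, by simp, by simp, by simp⟩
  · set u := (Quot.out e).1 with hu
    set v := (Quot.out e).2 with hv
    have hout : s(u, v) = e := by rw [hu, hv]; exact Quot.out_eq e
    have huv : u ≠ v := by
      intro h; apply hdiag e heH; rw [← hout, h]; exact Sym2.mk_isDiag_iff.mpr rfl
    have hue : u ∈ e := mem_of_eq_fst hout
    have hve : v ∈ e := mem_of_eq_snd hout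
    set H' := H.erase e with hH'
    have hdeg' : ∀ z, edeg H' z ≤ edeg H z := by
      intro z; rw [hH', edeg_erase]; split <;> omega
    have hdu : edeg H' u ≤ 1 := by
      rw [hH', edeg_erase, if_pos ⟨hue, heH⟩]; have := hdeg u; omega
    have hdv : edeg H' v ≤ 1 := by
      rw [hH', edeg_erase, if_pos ⟨hve, heH⟩]; have := hdeg v; omega
    obtain ⟨o', ho1, ho2, ho3, ho4, ho5⟩ :=
      orient2 H'.card H' rfl
        (fun e' he' => hdiag e' (Finset.mem_of_mem_erase he'))
        (fun z => le_trans (hdeg' z) (hdeg z)) u v hdu hdv (Or.inl huv)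
    refine ⟨fun e' => if e' = e then (v, u) else o' e', ?_, ?_, ?_⟩ <;> dsimp only
    · intro e' he'
      by_cases h : e' = e
      · subst h; rw [if_pos rfl, ← hout]; exact Sym2.eq_swap
      · rw [if_neg h]; exact ho1 e' (Finset.mem_erase.mpr ⟨h, he'⟩)
    · intro e1 h1 e2 h2 hne
      by_cases q1 : e1 = e <;> by_cases q2 : e2 = e
      · exact absurd (q1.trans q2.symm) hne
      · subst q1; rw [if_pos rfl, if_neg q2]
        exact fun heq => ho5 e2 (Finset.mem_erase.mpr ⟨q2, h2⟩) heq.symm |>.elim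
      · subst q2; rw [if_neg q1, if_pos rfl]
        exact ho5 e1 (Finset.mem_erase.mpr ⟨q1, h1⟩)
      · rw [if_neg q1, if_neg q2]
        exact ho2 e1 (Finset.mem_erase.mpr ⟨q1, h1⟩) e2 (Finset.mem_erase.mpr ⟨q2, h2⟩) hne
    · intro e1 h1 e2 h2 hne
      by_cases q1 : e1 = e <;> by_cases q2 : e2 = e
      · exact absurd (q1.trans q2.symm) hne
      · subst q1; rw [if_pos rfl, if_neg q2]
        exact fun heq => ho4 e2 (Finset.mem_erase.mpr ⟨q2, h2⟩) heq.symm |>.elim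
      · subst q2; rw [if_neg q1, if_pos rfl]
        exact ho4 e1 (Finset.mem_erase.mpr ⟨q1, h1⟩)
      · rw [if_neg q1, if_neg q2]
        exact ho3 e1 (Finset.mem_erase.mpr ⟨q1, h1⟩) e2 (Finset.mem_erase.mpr ⟨q2, h2⟩) hne

lemma sym2_eq_pair_iff {p : V × V} {i j : V} :
    s(p.1, p.2) = s(i, j) ↔ p = (i, j) ∨ p = (j, i) := by
  rw [Sym2.eq_iff]
  constructor
  · rintro (⟨h1, h2⟩ | ⟨h1, h2⟩)
    · left; exact Prod.ext h1 h2
    · right; exact Prod.ext h1 h2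
  · rintro (rfl | rfl)
    · left; exact ⟨rfl, rfl⟩
    · right; exact ⟨rfl, rfl⟩

lemma sum_fiber [Fintype V] [DecidableEq V] (A : Finset (V × V)) (g : Sym2 V → ℝ) :
    ∑ p ∈ A, g s(p.1, p.2) =
      ∑ e : Sym2 V, ((A.filter (fun p => s(p.1, p.2) = e)).card : ℝ) * g e := by
  have := Finset.sum_fiberwise_of_maps_to
    (fun (p : V × V) (_ : p ∈ A) => Finset.mem_univ (s(p.1, p.2))) (fun p => g s(p.1, p.2))
  rw [← this]
  refine Finset.sum_congr rfl fun e _ => ?_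
  rw [Finset.sum_congr rfl
    (fun p hp => by rw [(Finset.mem_filter.mp hp).2] :
      ∀ p ∈ A.filter (fun p => s(p.1, p.2) = e), g s(p.1, p.2) = g e)]
  rw [Finset.sum_const, nsmul_eq_mul]

lemma fiber_card [Fintype V] [DecidableEq V] (A : Finset (V × V)) (i j : V) (hij : i ≠ j) :
    (A.filter (fun p => s(p.1, p.2) = s(i, j))).card
      = (if (i, j) ∈ A then 1 else 0) + (if (j, i) ∈ A then 1 else 0) := by
  have hsplit : A.filter (fun p => s(p.1, p.2) = s(i, j))
      = A.filter (fun p => p = (i, j)) ∪ A.filter (fun p => p = (j, i)) := by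
    rw [← Finset.filter_or]
    exact Finset.filter_congr fun p _ => by rw [sym2_eq_pair_iff]
  have hdisj : Disjoint (A.filter (fun p => p = (i, j))) (A.filter (fun p => p = (j, i))) := by
    rw [Finset.disjoint_left]
    intro p hp1 hp2
    rw [Finset.mem_filter] at hp1 hp2
    apply hij
    have h12 := hp1.2.symm.trans hp2.2
    have h1 : i = j := congrArg Prod.fst h12
    exact h1
  rw [hsplit, Finset.card_union_of_disjoint hdisj, Finset.filter_eq', Finset.filter_eq']
  split <;> split <;> simp

lemma two_at_vertex [Fintype V] [DecidableEq V] {G : SimpleGraph V} {f : Sym2 V → ℝ}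
    (hf : IsFractionalMatching G f) {e1 e2 : Sym2 V} (hne : e1 ≠ e2) {v : V}
    (h1 : v ∈ e1) (h2 : v ∈ e2) : f e1 + f e2 ≤ 1 := by
  have hsub : ({e1, e2} : Finset (Sym2 V)) ⊆ Finset.univ.filter (fun e => v ∈ e) := by
    intro e he
    rcases Finset.mem_insert.mp he with rfl | he
    · exact Finset.mem_filter.mpr ⟨Finset.mem_univ _, h1⟩
    · rw [Finset.mem_singleton] at he; subst he
      exact Finset.mem_filter.mpr ⟨Finset.mem_univ _, h2⟩
  calc f e1 + f e2 = ∑ e ∈ ({e1, e2} : Finset (Sym2 V)), f e := (Finset.sum_pair hne).symm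
    _ ≤ ∑ e ∈ Finset.univ.filter (fun e => v ∈ e), f e :=
        Finset.sum_le_sum_of_subset_of_nonneg hsub (fun e _ _ => (hf.2.1 e).1)
    _ ≤ 1 := hf.2.2 v

lemma inj_lift : Function.Injective (fun p : V × V => s(Sum.inl p.1, (Sum.inr p.2 : V ⊕ V))) := by
  intro p q h
  simp only [Sym2.eq_iff] at h
  rcases h with ⟨h1, h2⟩ | ⟨h1, h2⟩
  · exact Prod.ext (Sum.inl.inj h1) (Sum.inr.inj h2)
  · exact absurd h1 (by simp)

lemma dup_edge_form {G : SimpleGraph V} {E : Sym2 (V ⊕ V)} (h : E ∈ (dup G).edgeSet) :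
    ∃ p : V × V, E = s(Sum.inl p.1, Sum.inr p.2) := by
  induction E using Sym2.ind with
  | _ a b =>
    rw [SimpleGraph.mem_edgeSet] at h
    rcases a with i | i <;> rcases b with j | j
    · exact absurd h (by simp [dup])
    · exact ⟨(i, j), rfl⟩
    · exact ⟨(j, i), Sym2.eq_swap⟩
    · exact absurd h (by simp [dup])

lemma dupW_eval (w : Sym2 V → ℝ) (i j : V) :
    dupW w s(Sum.inl i, Sum.inr j) = w s(i, j) / 2 := by
  rw [dupW, Sym2.lift_mk]

lemma dup_adj {G : SimpleGraph V} {i j : V} :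
    (dup G).Adj (Sum.inl i) (Sum.inr j) ↔ G.Adj i j := Iff.rfl

end Aux



lemma match_to_half [Fintype V] [DecidableEq V] (G : SimpleGraph V) (w : Sym2 V → ℝ)
    {M : Finset (Sym2 (V ⊕ V))} (hM : IsMatching (dup G) M) :
    ∃ f : Sym2 V → ℝ, IsHalfMatching G f ∧ fWeight w f = mWeight (dupW w) M := by
  classical
  set f : Sym2 V → ℝ := fun e => Sym2.lift ⟨fun i j =>
      ((if s(Sum.inl i, (Sum.inr j : V ⊕ V)) ∈ M then (1 : ℝ) else 0) +
       (if s(Sum.inl j, (Sum.inr i : V ⊕ V)) ∈ M then (1 : ℝ) else 0)) / 2,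
      fun i j => by dsimp only; rw [add_comm]⟩ e with hfdef
  have hfeval : ∀ i j : V, f s(i, j) =
      ((if s(Sum.inl i, (Sum.inr j : V ⊕ V)) ∈ M then (1 : ℝ) else 0) +
       (if s(Sum.inl j, (Sum.inr i : V ⊕ V)) ∈ M then (1 : ℝ) else 0)) / 2 := by
    intro i j; rw [hfdef]; exact Sym2.lift_mk _ _ _
  have hadj : ∀ i j : V, s(Sum.inl i, (Sum.inr j : V ⊕ V)) ∈ M → G.Adj i j := by
    intro i j hm
    have h := hM.1 _ hm
    rw [SimpleGraph.mem_edgeSet] at h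
    exact h
  have hsupp : ∀ e, e ∉ G.edgeSet → f e = 0 := by
    intro e he
    induction e using Sym2.ind with
    | _ i j =>
      rw [SimpleGraph.mem_edgeSet] at he
      rw [hfeval, if_neg, if_neg]
      · norm_num
      · intro hm
        have h2 : G.Adj j i := hadj j i hm
        exact he h2.symm
      · intro hm
        exact he (hadj i j hm)
  have hvals : ∀ e, f e = 0 ∨ f e = 1 / 2 ∨ f e = 1 := by
    intro e
    induction e using Sym2.ind with
    | _ i j =>
      rw [hfeval]
      split_ifs <;> norm_num
  have hvert : ∀ i : V,
      (∑ e ∈ Finset.univ.filter (fun e : Sym2 V => i ∈ e), f e) ≤ 1 := by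
    intro i
    have himg : Finset.univ.filter (fun e : Sym2 V => i ∈ e)
        = Finset.univ.image (fun j => s(i, j)) := by
      ext e
      simp only [Finset.mem_filter, Finset.mem_univ, true_and, Finset.mem_image]
      constructor
      · intro h
        obtain ⟨j, hj⟩ := Sym2.mem_iff_exists.mp h
        exact ⟨j, hj.symm⟩
      · rintro ⟨j, rfl⟩
        exact Sym2.mem_mk_left _ _
    rw [himg, Finset.sum_image (fun j _ k _ h => Sym2.congr_right.mp h)]
    have key : ∀ (g : V → Sym2 (V ⊕ V)) (x : V ⊕ V), Function.Injective g →
        (∀ j, x ∈ g j) →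
        (∑ j : V, (if g j ∈ M then (1 : ℝ) else 0)) ≤ 1 := by
      intro g x hginj hgmem
      rw [Finset.sum_boole]
      have hcard : (Finset.univ.filter (fun j => g j ∈ M)).card ≤ 1 := by
        rw [Finset.card_le_one]
        intro j1 hj1 j2 hj2
        rw [Finset.mem_filter] at hj1 hj2
        by_contra hne
        have hEne : g j1 ≠ g j2 := fun h => hne (hginj h)
        exact hM.2 _ hj1.2 _ hj2.2 hEne x (hgmem j1) (hgmem j2)
      exact_mod_cast hcard
    have hA : (∑ j : V, (if s(Sum.inl i, (Sum.inr j : V ⊕ V)) ∈ M then (1 : ℝ) else 0)) ≤ 1 := by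
      refine key _ (Sum.inl i) (fun j k h => ?_) (fun j => Sym2.mem_mk_left _ _)
      rcases Sym2.eq_iff.mp h with ⟨-, h2⟩ | ⟨h1, -⟩
      · exact Sum.inr.inj h2
      · exact absurd h1 (by simp)
    have hB : (∑ j : V, (if s(Sum.inl j, (Sum.inr i : V ⊕ V)) ∈ M then (1 : ℝ) else 0)) ≤ 1 := by
      refine key _ (Sum.inr i) (fun j k h => ?_) (fun j => Sym2.mem_mk_right _ _)
      rcases Sym2.eq_iff.mp h with ⟨h1, -⟩ | ⟨h1, -⟩
      · exact Sum.inl.inj h1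
      · exact absurd h1 (by simp)
    calc (∑ j : V, f s(i, j))
        = (∑ j : V, ((if s(Sum.inl i, (Sum.inr j : V ⊕ V)) ∈ M then (1 : ℝ) else 0) +
            (if s(Sum.inl j, (Sum.inr i : V ⊕ V)) ∈ M then (1 : ℝ) else 0)) / 2) :=
          Finset.sum_congr rfl fun j _ => hfeval i j
      _ = ((∑ j : V, (if s(Sum.inl i, (Sum.inr j : V ⊕ V)) ∈ M then (1 : ℝ) else 0)) +
            (∑ j : V, (if s(Sum.inl j, (Sum.inr i : V ⊕ V)) ∈ M then (1 : ℝ) else 0))) / 2 := by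
          rw [← Finset.sum_add_distrib, Finset.sum_div]
      _ ≤ (1 + 1) / 2 := by linarith
      _ = 1 := by norm_num
  have hbounds : ∀ e, 0 ≤ f e ∧ f e ≤ 1 := by
    intro e
    rcases hvals e with h | h | h <;> rw [h] <;> norm_num
  refine ⟨f, ⟨⟨hsupp, hbounds, hvert⟩, hvals⟩, ?_⟩
  -- weight equality
  set D : Finset (V × V) :=
    Finset.univ.filter (fun p => s(Sum.inl p.1, (Sum.inr p.2 : V ⊕ V)) ∈ M) with hD
  have hMD : M = D.image (fun p => s(Sum.inl p.1, Sum.inr p.2)) := by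
    ext E
    simp only [Finset.mem_image, hD, Finset.mem_filter, Finset.mem_univ, true_and]
    constructor
    · intro hE
      obtain ⟨p, rfl⟩ := dup_edge_form (hM.1 E hE)
      exact ⟨p, hE, rfl⟩
    · rintro ⟨p, hp, rfl⟩; exact hp
  have hMw : mWeight (dupW w) M = ∑ p ∈ D, w s(p.1, p.2) / 2 := by
    rw [mWeight, hMD, Finset.sum_image (fun p _ q _ h => inj_lift h)]
    exact Finset.sum_congr rfl fun p _ => dupW_eval w p.1 p.2
  rw [hMw, sum_fiber D (fun e => w e / 2), fWeight]
  refine Finset.sum_congr rfl fun e _ => ?_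
  induction e using Sym2.ind with
  | _ i j =>
    by_cases hij : i = j
    · subst hij
      have hnm : s(Sum.inl i, (Sum.inr i : V ⊕ V)) ∉ M := by
        intro hm
        exact (G.loopless.irrefl i) (hadj i i hm)
      have hzero : f s(i, i) = 0 := by
        rw [hfeval, if_neg hnm]; norm_num
      have hfib : D.filter (fun p => s(p.1, p.2) = s(i, i)) = ∅ := by
        rw [Finset.filter_eq_empty_iff]
        intro p hp hpe
        rcases sym2_eq_pair_iff.mp hpe with rfl | rfl <;>
          · rw [hD, Finset.mem_filter] at hp
            exact hnm hp.2
      rw [hfib, hzero]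
      simp
    · rw [fiber_card D i j hij, hfeval]
      have hmem1 : ((i, j) ∈ D) ↔ s(Sum.inl i, (Sum.inr j : V ⊕ V)) ∈ M := by
        rw [hD]; simp
      have hmem2 : ((j, i) ∈ D) ↔ s(Sum.inl j, (Sum.inr i : V ⊕ V)) ∈ M := by
        rw [hD]; simp
      simp only [hmem1, hmem2]
      split_ifs <;> push_cast <;> ring



lemma half_to_match [Fintype V] [DecidableEq V] (G : SimpleGraph V) (w : Sym2 V → ℝ)
    {f : Sym2 V → ℝ} (hf : IsHalfMatching G f) :
    ∃ M : Finset (Sym2 (V ⊕ V)), IsMatching (dup G) M ∧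
      mWeight (dupW w) M = fWeight w f := by
  classical
  obtain ⟨⟨hsupp, hval, hvert⟩, htri⟩ := hf
  have hfrac : IsFractionalMatching G f := ⟨hsupp, hval, hvert⟩
  set H : Finset (Sym2 V) := Finset.univ.filter (fun e => f e = 1/2) with hH
  have hne_zero : ∀ e, f e ≠ 0 → e ∈ G.edgeSet := by
    intro e h
    by_contra hc
    exact h (hsupp e hc)
  have hmemH : ∀ e, e ∈ H ↔ f e = 1/2 := by
    intro e; rw [hH, Finset.mem_filter]; simp
  have hdiag : ∀ e ∈ H, ¬ e.IsDiag := by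
    intro e he
    have h5 : f e = 1/2 := (hmemH e).mp he
    have : e ∈ G.edgeSet := hne_zero e (by rw [h5]; norm_num)
    exact (SimpleGraph.not_isDiag_of_mem_edgeSet G this)
  have hdeg : ∀ v, edeg H v ≤ 2 := by
    intro v
    have hsub : H.filter (fun e => v ∈ e) ⊆ Finset.univ.filter (fun e => v ∈ e) :=
      Finset.filter_subset_filter _ (Finset.subset_univ H)
    have hsum : (edeg H v : ℝ) * (1/2) ≤ 1 := by
      calc (edeg H v : ℝ) * (1/2)
          = ∑ e ∈ H.filter (fun e => v ∈ e), f e := by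
            rw [Finset.sum_congr rfl
              (fun e he => (hmemH e).mp (Finset.mem_of_mem_filter e he) :
                ∀ e ∈ H.filter (fun e => v ∈ e), f e = 1/2)]
            rw [Finset.sum_const, nsmul_eq_mul, edeg]
            norm_num
            congr 1
            try rfl
            try apply Finset.filter_congr_decidable
        _ ≤ ∑ e ∈ Finset.univ.filter (fun e => v ∈ e), f e :=
            Finset.sum_le_sum_of_subset_of_nonneg hsub (fun e _ _ => (hval e).1)
        _ ≤ 1 := hvert v
    by_contra hcon
    push_neg at hcon
    have h3 : (3 : ℝ) ≤ (edeg H v : ℝ) := by exact_mod_cast hcon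
    linarith
  obtain ⟨o, ho1, ho2, ho3⟩ := orient0 H hdiag hdeg
  set D : Finset (V × V) := Finset.univ.filter
    (fun p => f s(p.1, p.2) = 1 ∨ (f s(p.1, p.2) = 1/2 ∧ o s(p.1, p.2) = p)) with hD
  have hmemD : ∀ p : V × V, p ∈ D ↔
      (f s(p.1, p.2) = 1 ∨ (f s(p.1, p.2) = 1/2 ∧ o s(p.1, p.2) = p)) := by
    intro p; rw [hD, Finset.mem_filter]; simp
  set M : Finset (Sym2 (V ⊕ V)) := D.image (fun p => s(Sum.inl p.1, Sum.inr p.2)) with hM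
  have hDadj : ∀ p ∈ D, G.Adj p.1 p.2 := by
    intro p hp
    rw [hmemD] at hp
    have hnz : f s(p.1, p.2) ≠ 0 := by
      rcases hp with h | ⟨h, -⟩ <;> rw [h] <;> norm_num
    have := hne_zero _ hnz
    rw [SimpleGraph.mem_edgeSet] at this
    exact this
  have hmatch : IsMatching (dup G) M := by
    constructor
    · intro E hE
      rw [hM, Finset.mem_image] at hE
      obtain ⟨p, hp, rfl⟩ := hE
      rw [SimpleGraph.mem_edgeSet]
      exact hDadj p hp
    · intro E1 h1 E2 h2 hne v hv1 hv2
      rw [hM, Finset.mem_image] at h1 h2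
      obtain ⟨⟨p1, p2⟩, hp, rfl⟩ := h1
      obtain ⟨⟨q1, q2⟩, hq, rfl⟩ := h2
      have hpq : (p1, p2) ≠ (q1, q2) := fun h => hne (by rw [h])
      have hpadj : G.Adj p1 p2 := hDadj _ hp
      have hqadj : G.Adj q1 q2 := hDadj _ hq
      rw [hmemD] at hp hq
      dsimp only at hp hq
      rw [Sym2.mem_iff] at hv1 hv2
      have main : ∀ (a b1 b2 : V), b1 ≠ b2 →
          (f s(a, b1) = 1 ∨ (f s(a, b1) = 1/2 ∧ o s(a, b1) = (a, b1))) →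
          (f s(a, b2) = 1 ∨ (f s(a, b2) = 1/2 ∧ o s(a, b2) = (a, b2))) →
          G.Adj a b1 → G.Adj a b2 → False := by
        intro a b1 b2 hb hp1 hp2 hadj1 hadj2
        have hedne : s(a, b1) ≠ s(a, b2) := fun h => hb (Sym2.congr_right.mp h)
        have hm1 : a ∈ s(a, b1) := Sym2.mem_mk_left _ _
        have hm2 : a ∈ s(a, b2) := Sym2.mem_mk_left _ _
        have hbound := two_at_vertex hfrac hedne hm1 hm2
        rcases hp1 with e1 | ⟨e1, o1⟩ <;> rcases hp2 with e2 | ⟨e2, o2⟩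
        · rw [e1, e2] at hbound; linarith
        · rw [e1, e2] at hbound; linarith
        · rw [e1, e2] at hbound; linarith
        · have hH1 : s(a, b1) ∈ H := (hmemH _).mpr e1
          have hH2 : s(a, b2) ∈ H := (hmemH _).mpr e2
          have := ho2 _ hH1 _ hH2 hedne
          rw [o1, o2] at this
          exact this rfl
      have main2 : ∀ (a b1 b2 : V), b1 ≠ b2 →
          (f s(b1, a) = 1 ∨ (f s(b1, a) = 1/2 ∧ o s(b1, a) = (b1, a))) →
          (f s(b2, a) = 1 ∨ (f s(b2, a) = 1/2 ∧ o s(b2, a) = (b2, a))) →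
          G.Adj b1 a → G.Adj b2 a → False := by
        intro a b1 b2 hb hp1 hp2 hadj1 hadj2
        have hedne : s(b1, a) ≠ s(b2, a) := by
          intro h
          rw [Sym2.eq_iff] at h
          rcases h with ⟨h1, -⟩ | ⟨h1, h2⟩
          · exact hb h1
          · exact hadj1.ne h1
        have hm1 : a ∈ s(b1, a) := Sym2.mem_mk_right _ _
        have hm2 : a ∈ s(b2, a) := Sym2.mem_mk_right _ _
        have hbound := two_at_vertex hfrac hedne hm1 hm2
        rcases hp1 with e1 | ⟨e1, o1⟩ <;> rcases hp2 with e2 | ⟨e2, o2⟩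
        · rw [e1, e2] at hbound; linarith
        · rw [e1, e2] at hbound; linarith
        · rw [e1, e2] at hbound; linarith
        · have hH1 : s(b1, a) ∈ H := (hmemH _).mpr e1
          have hH2 : s(b2, a) ∈ H := (hmemH _).mpr e2
          have := ho3 _ hH1 _ hH2 hedne
          rw [o1, o2] at this
          exact this rfl
      rcases hv1 with rfl | rfl
      · rcases hv2 with h | h
        · have h11 : p1 = q1 := Sum.inl.inj h
          subst h11
          have h22 : p2 ≠ q2 := fun hc => hpq (by rw [hc])
          exact main p1 p2 q2 h22 hp hq hpadj hqadj
        · exact absurd h (by simp)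
      · rcases hv2 with h | h
        · exact absurd h (by simp)
        · have h22 : p2 = q2 := Sum.inr.inj h
          subst h22
          have h11 : p1 ≠ q1 := fun hc => hpq (by rw [hc])
          exact main2 p2 p1 q1 h11 hp hq hpadj hqadj
  refine ⟨M, hmatch, ?_⟩
  have hMw : mWeight (dupW w) M = ∑ p ∈ D, w s(p.1, p.2) / 2 := by
    rw [mWeight, hM, Finset.sum_image (fun p _ q _ h => inj_lift h)]
    exact Finset.sum_congr rfl fun p _ => dupW_eval w p.1 p.2
  rw [hMw, sum_fiber D (fun e => w e / 2), fWeight]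
  refine Finset.sum_congr rfl fun e _ => ?_
  induction e using Sym2.ind with
  | _ i j =>
    by_cases hij : i = j
    · subst hij
      have hzero : f s(i, i) = 0 := by
        by_contra hc
        exact SimpleGraph.not_isDiag_of_mem_edgeSet G (hne_zero _ hc)
          (Sym2.mk_isDiag_iff.mpr rfl)
      have hfib : D.filter (fun p => s(p.1, p.2) = s(i, i)) = ∅ := by
        rw [Finset.filter_eq_empty_iff]
        intro p hp hpe
        rw [hmemD] at hp
        have hps : s(p.1, p.2) = s(i, i) := hpe
        rw [hps, hzero] at hp
        rcases hp with h | ⟨h, -⟩ <;> norm_num at h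
      rw [hfib, hzero]
      simp
    · rw [fiber_card D i j hij]
      have hji : s(j, i) = s(i, j) := Sym2.eq_swap
      have hd1 : ((i, j) ∈ D) ↔
          (f s(i, j) = 1 ∨ (f s(i, j) = 1/2 ∧ o s(i, j) = (i, j))) := hmemD (i, j)
      have hd2 : ((j, i) ∈ D) ↔
          (f s(i, j) = 1 ∨ (f s(i, j) = 1/2 ∧ o s(i, j) = (j, i))) := by
        rw [hmemD]
        dsimp only
        rw [hji]
      rcases htri s(i, j) with h0 | hhalf | h1
      · have hn1 : (i, j) ∉ D := by rw [hd1, h0]; norm_num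
        have hn2 : (j, i) ∉ D := by rw [hd2, h0]; norm_num
        rw [if_neg hn1, if_neg hn2, h0]
        norm_num
      · have heH : s(i, j) ∈ H := (hmemH _).mpr hhalf
        have hoe : s((o s(i, j)).1, (o s(i, j)).2) = s(i, j) := ho1 _ heH
        have hone : f s(i, j) ≠ 1 := by rw [hhalf]; norm_num
        rcases sym2_eq_pair_iff.mp hoe with hc | hc
        · have hin : (i, j) ∈ D := hd1.mpr (Or.inr ⟨hhalf, hc⟩)
          have hout : (j, i) ∉ D := by
            rw [hd2]
            push_neg
            refine ⟨hone, fun _ hcon => ?_⟩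
            have h' := hc.symm.trans hcon
            exact absurd (congrArg Prod.fst h') hij
          rw [if_pos hin, if_neg hout, hhalf]
          push_cast
          ring
        · have hin : (j, i) ∈ D := hd2.mpr (Or.inr ⟨hhalf, hc⟩)
          have hout : (i, j) ∉ D := by
            rw [hd1]
            push_neg
            refine ⟨hone, fun _ hcon => ?_⟩
            have h' := hc.symm.trans hcon
            exact absurd (congrArg Prod.fst h').symm hij
          rw [if_neg hout, if_pos hin, hhalf]
          push_cast
          ring
      · have hin1 : (i, j) ∈ D := hd1.mpr (Or.inl h1)
        have hin2 : (j, i) ∈ D := hd2.mpr (Or.inl h1)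
        rw [if_pos hin1, if_pos hin2, h1]
        push_cast
        ring

/-- the maximum weight of a half-matching of `(G,w)` equals the maximum
weight of a matching of the duplicate `(G^d, w^d)`. -/
theorem statement5 [Fintype V] [DecidableEq V] (G : SimpleGraph V) (w : Sym2 V → ℝ)
    (hw : ∀ e ∈ G.edgeSet, 0 < w e) :
    sSup {t | ∃ f : Sym2 V → ℝ, IsHalfMatching G f ∧ t = fWeight w f} =
      matchVal (dup G) (dupW w) Finset.univ := by
  have hsets : {t | ∃ f : Sym2 V → ℝ, IsHalfMatching G f ∧ t = fWeight w f} =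
      {t | ∃ M : Finset (Sym2 (V ⊕ V)), IsMatching (dup G) M ∧
        EdgesIn Finset.univ M ∧ t = mWeight (dupW w) M} := by
    ext t
    simp only [Set.mem_setOf_eq]
    constructor
    · rintro ⟨f, hf, rfl⟩
      obtain ⟨M, hMm, hw'⟩ := half_to_match G w hf
      exact ⟨M, hMm, fun e _ v _ => Finset.mem_univ v, hw'.symm⟩
    · rintro ⟨M, hMm, -, rfl⟩
      obtain ⟨f, hf, hw'⟩ := match_to_half G w hMm
      exact ⟨f, hf, hw'.symm⟩
  rw [matchVal, hsets]

end MatchingGames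
end
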